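/- arXiv:math/0205042 — 9 statements merged into one kernel-verified Lean document; each statement's English description precedes it below -/
import Mathlib

section
/- Let $\mathfrak{g}$ be a filiform Lie algebra of dimension $n$ over a field of characteristic zero. Then there exists a basis $e_1,e_2,\dots,e_n$ of $\mathfrak{g}$ such that $[e_1,e_i]=e_{i+1}$ for $i=2,\dots,n-1$. -/
open Module Submodule LieModule

/-!
Write `C k` for the `k`-th term of the lower central series (`C 0 = L`). Filiformity forces the
series to drop strictly until it reaches `0` at `k = n - 1`, and since `C 1 = [L, L]` has
codimension at least two, every later step has codimension exactly one. For each `k` the `x` with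
`⁅x, C k⁆ ⊆ C (k + 2)` form a proper subspace, so over an infinite field some `x` lies outside all
of them. For `y` with `⁅x, y⁆ ∉ C 2`, the iterates `(ad x)^k y` then lie in `C k \ C (k + 1)` for
`1 ≤ k ≤ n - 2`, and together with `x` and `y` they form the required basis.
-/

theorem le_of_forall_le_sup_succ {α : Type*} [SemilatticeSup α] {f : ℕ → α} {s : α} {a b : ℕ}
    (hab : a ≤ b) (hf : ∀ k, a ≤ k → k < b → f k ≤ s ⊔ f (k + 1)) (hb : f b ≤ s) : f a ≤ s := by
  suffices ∀ k (hkb : k ≤ b), a ≤ k → f k ≤ s from this a hab le_rfl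
  intro k hkb
  induction hkb using Nat.decreasingInduction with
  | self => exact fun _ => hb
  | of_succ k hkb ih => exact fun hak => (hf k hak hkb).trans (sup_le le_rfl (ih (by omega)))

theorem Nat.eq_sub_of_forall_succ_lt {d : ℕ → ℕ} {a m : ℕ}
    (hd : ∀ k, a ≤ k → k < m → d (k + 1) < d k) (ha : d a ≤ m - a) {k : ℕ} (hak : a ≤ k)
    (hkm : k ≤ m) : d k = m - k := by
  have upper : d k + (k - a) ≤ d a := by
    induction k, hak using Nat.le_induction with
    | base => simp
    | succ k hak ih => have := hd k hak (by omega); have := ih (by omega); omega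
  have lower : m - k ≤ d k := by
    induction hkm using Nat.decreasingInduction with
    | self => simp
    | of_succ j hjm ih => have := hd j (by omega) hjm; omega
  omega

theorem Submodule.sup_span_singleton_eq_of_finrank_eq_succ {K V : Type*} [Field K]
    [AddCommGroup V] [Module K V] [FiniteDimensional K V] {M N : Submodule K V} {v : V}
    (hMN : M ≤ N) (hv : v ∈ N) (hvM : v ∉ M) (h : finrank K N = finrank K M + 1) :
    M ⊔ K ∙ v = N :=
  eq_of_le_of_finrank_eq (sup_le hMN ((span_singleton_le_iff_mem _ _).2 hv))
    (by rw [finrank_sup_span_singleton hvM, h])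

section LieModule

variable {K L M : Type*} [CommRing K] [LieRing L] [LieAlgebra K L] [AddCommGroup M] [Module K M]
  [LieRingModule L M]

theorem lowerCentralSeries_succ_lt_of_le {j k : ℕ} (hkj : k ≤ j)
    (hj : lowerCentralSeries K L M (j + 1) ≠ lowerCentralSeries K L M j) :
    lowerCentralSeries K L M (k + 1) < lowerCentralSeries K L M k := by
  refine (antitone_lowerCentralSeries K L M k.le_succ).lt_of_ne fun hk => hj ?_
  have hstable : ∀ i, k ≤ i → lowerCentralSeries K L M i = lowerCentralSeries K L M k := by
    intro i hki
    induction i, hki using Nat.le_induction with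
    | base => rfl
    | succ i _ ih => rw [lowerCentralSeries_succ, ih, ← lowerCentralSeries_succ, hk]
  rw [hstable (j + 1) (by omega), hstable j hkj]

theorem lowerCentralSeries_succ_lt_of_filiform {n k : ℕ}
    (hfil1 : lowerCentralSeries K L M (n - 2) ≠ ⊥) (hfil2 : lowerCentralSeries K L M (n - 1) = ⊥)
    (hk : k + 2 ≤ n) : lowerCentralSeries K L M (k + 1) < lowerCentralSeries K L M k :=
  lowerCentralSeries_succ_lt_of_le (j := n - 2) (by omega)
    (by rwa [show n - 2 + 1 = n - 1 by omega, hfil2, ne_comm])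

variable [LieModule K L M]

variable (L) in
def lieColon (A B : Submodule K M) : Submodule K L where
  carrier := {x | A ≤ B.comap (toEnd K L M x)}
  add_mem' {x y} hx hy m hm := by
    simpa only [mem_comap, map_add, LinearMap.add_apply] using B.add_mem (hx hm) (hy hm)
  zero_mem' m _ := by simp
  smul_mem' c x hx m hm := by
    simpa only [mem_comap, map_smul, LinearMap.smul_apply] using B.smul_mem c (hx hm)

theorem mem_lieColon {A B : Submodule K M} {x : L} :
    x ∈ lieColon L A B ↔ A ≤ B.comap (toEnd K L M x) := Iff.rfl

variable (K M) in
theorem lowerCentralSeries_le_comap_toEnd (x : L) (k : ℕ) :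
    (lowerCentralSeries K L M k : Submodule K M) ≤
      (lowerCentralSeries K L M (k + 1) : Submodule K M).comap (toEnd K L M x) := by
  intro m hm
  rw [mem_comap, toEnd_apply_apply, LieSubmodule.mem_toSubmodule, lowerCentralSeries_succ]
  exact LieSubmodule.lie_mem_lie (LieSubmodule.mem_top x) hm

theorem lieColon_lowerCentralSeries_ne_top {k : ℕ}
    (h : ¬ lowerCentralSeries K L M (k + 1) ≤ lowerCentralSeries K L M (k + 2)) :
    lieColon L (lowerCentralSeries K L M k : Submodule K M) (lowerCentralSeries K L M (k + 2)) ≠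
      ⊤ := by
  intro htop
  refine h ?_
  rw [lowerCentralSeries_succ K L M k, LieSubmodule.lie_le_iff]
  intro x _ m hm
  exact mem_lieColon.1 (htop ▸ mem_top : x ∈ lieColon L _ _) hm

theorem lie_notMem_of_notMem_lieColon {A B C : Submodule K M} {x : L} {v : M}
    (hA : A = B ⊔ K ∙ v) (hB : B ≤ C.comap (toEnd K L M x)) (hx : x ∉ lieColon L A C) :
    ⁅x, v⁆ ∉ C := fun hv =>
  hx (hA ▸ sup_le hB ((span_singleton_le_iff_mem _ _).2 hv))

end LieModule

section Field

variable {K L M : Type*} [Field K] [LieRing L] [LieAlgebra K L] [AddCommGroup M] [Module K M]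
  [LieRingModule L M] [LieModule K L M]

theorem exists_forall_notMem_lieColon [Infinite K] {m : ℕ}
    (h : ∀ k < m, ¬ lowerCentralSeries K L M (k + 1) ≤ lowerCentralSeries K L M (k + 2)) :
    ∃ x : L, ∀ k < m,
      x ∉ lieColon L (lowerCentralSeries K L M k : Submodule K M)
        (lowerCentralSeries K L M (k + 2)) := by
  by_contra! hcover
  obtain ⟨k, hk⟩ := Subspace.exists_eq_top_of_iUnion_eq_univ (ι := Fin m)
    (p := fun k => lieColon L (lowerCentralSeries K L M k : Submodule K M)
      (lowerCentralSeries K L M (k + 2)))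
    (Set.eq_univ_of_forall fun x => by
      obtain ⟨k, hkm, hx⟩ := hcover x
      exact Set.mem_iUnion.2 ⟨⟨k, hkm⟩, hx⟩)
  exact lieColon_lowerCentralSeries_ne_top (h k k.2) hk

end Field

section Filiform

variable {K L : Type*} [Field K] [LieRing L] [LieAlgebra K L] [FiniteDimensional K L]

local notation:max "𝒞" k:max => LieSubmodule.toSubmodule (lowerCentralSeries K L L k)

theorem finrank_lowerCentralSeries_one_sup_sup {x y : L} (hxy : ⁅x, y⁆ ∉ 𝒞 2) :
    finrank K ↥(𝒞 1 ⊔ K ∙ x ⊔ K ∙ y) = finrank K (𝒞 1) + 2 := by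
  have hx : x ∉ 𝒞 1 := fun hx =>
    hxy (by rw [← lie_skew]; exact neg_mem (lowerCentralSeries_le_comap_toEnd K L y 1 hx))
  have hy : y ∉ 𝒞 1 ⊔ K ∙ x := fun hy => hxy <|
    sup_le (lowerCentralSeries_le_comap_toEnd K L x 1)
      ((span_singleton_le_iff_mem _ _).2 (by simp)) hy
  rw [finrank_sup_span_singleton hy, finrank_sup_span_singleton hx]

theorem finrank_lowerCentralSeries_of_filiform {n k : ℕ} (hn : finrank K L = n)
    (hfil1 : lowerCentralSeries K L L (n - 2) ≠ ⊥) (hfil2 : lowerCentralSeries K L L (n - 1) = ⊥)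
    (hn3 : 3 ≤ n) (hk1 : 1 ≤ k) (hkn : k ≤ n - 1) : finrank K (𝒞 k) = n - 1 - k := by
  obtain ⟨x, y, hxy⟩ : ∃ x y : L, ⁅x, y⁆ ∉ 𝒞 2 := by
    by_contra! h
    refine (lowerCentralSeries_succ_lt_of_filiform hfil1 hfil2 (k := 1) (by omega)).not_ge ?_
    rw [lowerCentralSeries_succ K L L 0, lowerCentralSeries_zero, LieSubmodule.lie_le_iff]
    exact fun x _ y _ => h x y
  refine Nat.eq_sub_of_forall_succ_lt (d := fun j => finrank K (𝒞 j)) (a := 1)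
    (fun j hj hjn => ?_) ?_ hk1 hkn
  · exact Submodule.finrank_lt_finrank_of_lt
      (by exact_mod_cast lowerCentralSeries_succ_lt_of_filiform hfil1 hfil2 (by omega))
  · have := finrank_lowerCentralSeries_one_sup_sup hxy
    have := Submodule.finrank_le (𝒞 1 ⊔ K ∙ x ⊔ K ∙ y)
    omega

theorem lowerCentralSeries_eq_sup_span_iterate {n : ℕ} (hn : finrank K L = n)
    (hfil1 : lowerCentralSeries K L L (n - 2) ≠ ⊥) (hfil2 : lowerCentralSeries K L L (n - 1) = ⊥)
    {x y : L} (hx : ∀ k < n - 2, x ∉ lieColon L (𝒞 k) (𝒞 (k + 2))) (hxy : ⁅x, y⁆ ∉ 𝒞 2)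
    {k : ℕ} (hk1 : 1 ≤ k) (hkn : k + 2 ≤ n) :
    𝒞 k = 𝒞 (k + 1) ⊔ K ∙ (toEnd K L L x)^[k] y := by
  have hcodim : ∀ j (v : L), 1 ≤ j → j + 2 ≤ n → v ∈ 𝒞 j → v ∉ 𝒞 (j + 1) →
      𝒞 j = 𝒞 (j + 1) ⊔ K ∙ v := fun j v hj hjn hv hv' =>
    (sup_span_singleton_eq_of_finrank_eq_succ
      (LieModule.antitone_lowerCentralSeries K L L j.le_succ) hv hv'
      (by rw [finrank_lowerCentralSeries_of_filiform hn hfil1 hfil2 (by omega) hj (by omega),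
        finrank_lowerCentralSeries_of_filiform hn hfil1 hfil2 (by omega) (by omega) (by omega)]
          omega)).symm
  induction k, hk1 using Nat.le_induction with
  | base => exact hcodim 1 _ le_rfl hkn (iterate_toEnd_mem_lowerCentralSeries K L L x y 1) hxy
  | succ k hk ih =>
    refine hcodim (k + 1) _ (by omega) hkn (iterate_toEnd_mem_lowerCentralSeries K L L x y _) ?_
    rw [Function.iterate_succ_apply', toEnd_apply_apply]
    exact lie_notMem_of_notMem_lieColon (ih (by omega))
      (lowerCentralSeries_le_comap_toEnd K L x (k + 1)) (hx k (by omega))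

theorem top_le_of_filiform {n : ℕ} (hn : finrank K L = n)
    (hfil1 : lowerCentralSeries K L L (n - 2) ≠ ⊥) (hfil2 : lowerCentralSeries K L L (n - 1) = ⊥)
    (hn3 : 3 ≤ n) {x y : L} (hx : ∀ k < n - 2, x ∉ lieColon L (𝒞 k) (𝒞 (k + 2)))
    (hxy : ⁅x, y⁆ ∉ 𝒞 2) {S : Submodule K L} (hxS : x ∈ S) (hyS : y ∈ S)
    (hS : ∀ k, 1 ≤ k → k + 2 ≤ n → (toEnd K L L x)^[k] y ∈ S) : ⊤ ≤ S := by
  have hC1 : 𝒞 1 ≤ S := by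
    refine le_of_forall_le_sup_succ (f := fun k => 𝒞 k) (b := n - 1) (by omega)
      (fun k hk hkn => ?_) (by simp [hfil2])
    rw [lowerCentralSeries_eq_sup_span_iterate hn hfil1 hfil2 hx hxy hk (by omega), sup_comm]
    exact sup_le_sup_right ((span_singleton_le_iff_mem _ _).2 (hS k hk (by omega))) _
  have htop : 𝒞 1 ⊔ K ∙ x ⊔ K ∙ y = ⊤ := by
    refine eq_top_of_finrank_eq ?_
    rw [finrank_lowerCentralSeries_one_sup_sup hxy,
      finrank_lowerCentralSeries_of_filiform hn hfil1 hfil2 hn3 le_rfl (by omega), hn]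
    omega
  rw [← htop]
  exact sup_le (sup_le hC1 ((span_singleton_le_iff_mem _ _).2 hxS))
    ((span_singleton_le_iff_mem _ _).2 hyS)

end Filiform

/-- Vergne's adapted basis lemma.  Let `𝔤` be a filiform Lie
algebra of dimension `n` over a field of characteristic zero, i.e. a nilpotent
Lie algebra with `C^{n-1} 𝔤 ≠ 0` and `C^n 𝔤 = 0` (where
`C^k 𝔤 = LieModule.lowerCentralSeries K L L (k-1)`).  Then there is a basis
`e₁, …, eₙ` (indexed here by `0, …, n-1`) with `[e₁, eᵢ] = e_{i+1}` for
`i = 2, …, n-1`. -/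
theorem stmt5 (K L : Type*) [Field K] [CharZero K] [LieRing L] [LieAlgebra K L]
    [FiniteDimensional K L] (n : ℕ)
    (hn : Module.finrank K L = n)
    (hfil1 : LieModule.lowerCentralSeries K L L (n - 2) ≠ ⊥)
    (hfil2 : LieModule.lowerCentralSeries K L L (n - 1) = ⊥) :
    ∃ e : Module.Basis (Fin n) K L, ∀ i : ℕ, ∀ h : 1 ≤ i ∧ i + 1 ≤ n - 1,
      ⁅e ⟨0, by omega⟩, e ⟨i, by omega⟩⁆ = e ⟨i + 1, by omega⟩ := by
  rcases lt_or_ge n 3 with hn3 | hn3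
  · exact ⟨finBasisOfFinrankEq K L hn, fun i hi => absurd hi (by omega)⟩
  obtain ⟨x, hx⟩ := exists_forall_notMem_lieColon (K := K) (M := L) (m := n - 2) fun k hk =>
    (lowerCentralSeries_succ_lt_of_filiform hfil1 hfil2 (by omega)).not_ge
  obtain ⟨y, -, hxy⟩ := SetLike.not_le_iff_exists.1 (mt mem_lieColon.2 (hx 0 (by omega)))
  let e : Fin n → L := fun i => if (i : ℕ) = 0 then x else (toEnd K L L x)^[i - 1] y
  have hspan : ⊤ ≤ span K (Set.range e) :=
    top_le_of_filiform hn hfil1 hfil2 hn3 hx hxy (subset_span ⟨⟨0, by omega⟩, rfl⟩)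
      (subset_span ⟨⟨1, by omega⟩, by simp [e]⟩)
      fun k _ hkn => subset_span ⟨⟨k + 1, by omega⟩, by simp [e]⟩
  refine ⟨basisOfTopLeSpanOfCardEqFinrank e hspan (by simp [hn]), fun i hi => ?_⟩
  obtain ⟨j, rfl⟩ : ∃ j, i = j + 1 := ⟨i - 1, by omega⟩
  simp [e, coe_basisOfTopLeSpanOfCardEqFinrank, Function.iterate_succ_apply']
end

section
/- Let $\mathfrak{g}$ be a filiform Lie algebra with one-dimensional center spanned by $\xi$, and let $\tilde{\mathfrak{g}}=\mathbb{K}\oplus\mathfrak{g}$ be the one-dimensional central extension determined by a 2-cocycle $c$. Then $\tilde{\mathfrak{g}}$ is filiform if and only if the linear functional $f(\cdot)=c(\cdot,\xi)$ is nonzero on $\mathfrak{g}$. -/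
/-- Let `𝔤` be an `n`-dimensional filiform Lie algebra
(`C^{n-1} 𝔤 ≠ 0`, `C^n 𝔤 = 0`) over a field `K` of characteristic zero, with
one-dimensional center spanned by `ξ`.  Let `c` be an antisymmetric 2-cocycle
and let `E ≅ K ⊕ 𝔤` (via the linear equivalence `f`) be the corresponding
one-dimensional central extension, with bracket
`[(λ,g),(μ,h)] = (c g h, [g,h])`.  Then `E` (of dimension `n+1`) is filiform,
i.e. `C^n E ≠ 0` and `C^{n+1} E = 0`, if and only if the linear functional
`x ↦ c x ξ` is nonzero on `𝔤`. -/
theorem stmt8 (K L E : Type*) [Field K] [CharZero K]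
    [LieRing L] [LieAlgebra K L] [FiniteDimensional K L]
    [LieRing E] [LieAlgebra K E]
    (n : ℕ) (hn : Module.finrank K L = n)
    (hfil1 : LieModule.lowerCentralSeries K L L (n - 2) ≠ ⊥)
    (hfil2 : LieModule.lowerCentralSeries K L L (n - 1) = ⊥)
    (ξ : L) (hξ : ξ ≠ 0)
    (hcenter : (LieAlgebra.center K L).toSubmodule = Submodule.span K {ξ})
    (c : L →ₗ[K] L →ₗ[K] K)
    (hskew : ∀ x y : L, c x y = - c y x)
    (hcocycle : ∀ x y z : L, c ⁅x, y⁆ z + c ⁅y, z⁆ x + c ⁅z, x⁆ y = 0)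
    (f : E ≃ₗ[K] K × L)
    (hf : ∀ x y : E, f ⁅x, y⁆ = (c (f x).2 (f y).2, ⁅(f x).2, (f y).2⁆)) :
    (LieModule.lowerCentralSeries K E E (n - 1) ≠ ⊥ ∧
      LieModule.lowerCentralSeries K E E n = ⊥)
      ↔ ∃ x : L, c x ξ ≠ 0 := by
  classical
  -- `ξ` is central
  have hξcen : ∀ y : L, ⁅y, ξ⁆ = 0 := by
    have : ξ ∈ (LieAlgebra.center K L).toSubmodule := by
      rw [hcenter]; exact Submodule.mem_span_singleton_self ξ
    exact (LieModule.mem_maxTrivSubmodule K L L ξ).1 this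
  -- n ≥ 2
  have hn2 : 2 ≤ n := by
    by_contra h
    have h0 : n - 1 = 0 := by omega
    rw [h0, LieModule.lowerCentralSeries_zero] at hfil2
    exact hξ ((LieSubmodule.eq_bot_iff _).1 hfil2 ξ (LieSubmodule.mem_top ξ))
  obtain ⟨m, rfl⟩ : ∃ m, n = m + 2 := ⟨n - 2, by omega⟩
  have e1 : m + 2 - 1 = m + 1 := by omega
  have e2 : m + 2 - 2 = m := by omega
  rw [e1] at hfil2 ⊢
  rw [e2] at hfil1
  -- the projection Lie algebra morphism
  set g : E →ₗ⁅K⁆ L :=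
    { toLinearMap := (LinearMap.snd K K L) ∘ₗ (f : E →ₗ[K] K × L)
      map_lie' := by intro x y; simp [hf] } with hg
  have hgapply : ∀ x : E, g x = (f x).2 := fun x => rfl
  have hgsurj : Function.Surjective g := by
    intro x
    refine ⟨f.symm (0, x), ?_⟩
    simp [hgapply]
  have hmap : ∀ k, LieIdeal.map g (LieModule.lowerCentralSeries K E E k)
      = LieModule.lowerCentralSeries K L L k :=
    fun k => LieIdeal.lowerCentralSeries_map_eq k hgsurj
  -- C^{m}L ≤ span ξ
  have hsub : (LieModule.lowerCentralSeries K L L m : Submodule K L)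
      ≤ Submodule.span K {ξ} := by
    intro x hx
    have hx' : x ∈ LieModule.lowerCentralSeries K L L m := hx
    rw [← hcenter]
    rw [LieSubmodule.mem_toSubmodule, LieModule.mem_maxTrivSubmodule]
    intro y
    have : ⁅y, x⁆ ∈ LieModule.lowerCentralSeries K L L (m + 1) := by
      rw [LieModule.lowerCentralSeries_succ]
      exact LieSubmodule.lie_mem_lie (LieSubmodule.mem_top y) hx'
    rw [hfil2] at this
    exact this
  -- projections of members of C^k E land in C^k L
  have hproj : ∀ k (x : E), x ∈ LieModule.lowerCentralSeries K E E k →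
      g x ∈ LieModule.lowerCentralSeries K L L k := by
    intro k x hx
    rw [← hmap k]
    exact LieIdeal.mem_map hx
  -- C^{n}E = ⊥ unconditionally
  have hCnE : LieModule.lowerCentralSeries K E E (m + 2) = ⊥ := by
    rw [eq_bot_iff, LieModule.lowerCentralSeries_succ,
      LieSubmodule.lieIdeal_oper_eq_span, LieSubmodule.lieSpan_le]
    rintro z ⟨x, b, rfl⟩
    have hb : g (b : E) = 0 := by
      have := hproj (m + 1) b b.2
      rw [hfil2] at this
      exact this
    have : f ⁅(x : E), (b : E)⁆ = 0 := by
      rw [hf]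
      rw [hgapply] at hb
      rw [hb]
      simp
    have h0 : ⁅(x : E), (b : E)⁆ = 0 := by
      apply f.injective; rw [this, map_zero]
    rw [h0]; exact (⊥ : LieSubmodule K E E).zero_mem
  constructor
  · rintro ⟨h1, -⟩
    by_contra hc
    push_neg at hc
    apply h1
    rw [eq_bot_iff, LieModule.lowerCentralSeries_succ,
      LieSubmodule.lieIdeal_oper_eq_span, LieSubmodule.lieSpan_le]
    rintro z ⟨x, b, rfl⟩
    have hb : g (b : E) ∈ Submodule.span K {ξ} := hsub (hproj m b b.2)
    obtain ⟨t, ht⟩ := Submodule.mem_span_singleton.1 hb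
    have : f ⁅(x : E), (b : E)⁆ = 0 := by
      rw [hgapply] at ht
      rw [hf, ← ht]
      simp [hc, hξcen]
    have h0 : ⁅(x : E), (b : E)⁆ = 0 := by
      apply f.injective; rw [this, map_zero]
    rw [h0]; exact (⊥ : LieSubmodule K E E).zero_mem
  · rintro ⟨u, hu⟩
    refine ⟨?_, hCnE⟩
    -- ξ ∈ C^m L
    have hξmem : ξ ∈ LieModule.lowerCentralSeries K L L m := by
      obtain ⟨x, hx, hx0⟩ : ∃ x, x ∈ LieModule.lowerCentralSeries K L L m ∧ x ≠ 0 := by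
        by_contra h
        push_neg at h
        exact hfil1 ((LieSubmodule.eq_bot_iff _).2 h)
      obtain ⟨t, ht⟩ := Submodule.mem_span_singleton.1 (hsub hx)
      have ht0 : t ≠ 0 := by rintro rfl; simp at ht; exact hx0 ht.symm
      have : ξ = t⁻¹ • x := by rw [← ht, smul_smul, inv_mul_cancel₀ ht0, one_smul]
      rw [this]
      exact Submodule.smul_mem _ _ hx
    -- lift ξ to C^m E
    have : ξ ∈ LieIdeal.map g (LieModule.lowerCentralSeries K E E m) := by
      rw [hmap]; exact hξmem
    obtain ⟨b, hbξ⟩ := LieIdeal.mem_map_of_surjective hgsurj this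
    set a : E := f.symm (0, u) with ha
    have hga : g a = u := by simp [hgapply, ha]
    have hbr : ⁅a, (b : E)⁆ ∈ LieModule.lowerCentralSeries K E E (m + 1) := by
      rw [LieModule.lowerCentralSeries_succ]
      exact LieSubmodule.lie_mem_lie (LieSubmodule.mem_top a) b.2
    intro hbot
    have h0 : ⁅a, (b : E)⁆ = 0 := by
      rw [hbot] at hbr
      exact hbr
    have : f ⁅a, (b : E)⁆ = (c u ξ, 0) := by
      rw [hf]
      rw [hgapply] at hga hbξ
      rw [hga, hbξ, hξcen]
    rw [h0, map_zero] at this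
    exact hu (congrArg Prod.fst this).symm
end

section
/- For $n\ge 3$, the second Lie algebra cohomology $H^2(\mathfrak{m}_0(n);\mathbb{K})$ has dimension $\lfloor (n+1)/2 \rfloor$, with a basis given by the classes of the cocycles $e^1\wedge e^n$ and $\frac{1}{2}\sum_{i=2}^{2k-1}(-1)^i e^i\wedge e^{2k+1-i}$ for $k=2,\dots,\lfloor (n+1)/2\rfloor$. -/
/-
In the basis `e₁, …, eₙ` the coboundary of `f` is `Σ_{j ≥ 2} f(e_{j+1}) e¹ ∧ eʲ`, and the cocycle
condition only constrains the entries with both indices `≥ 2`: `c(e_{j+1}, e_l) = c(e_{l+1}, e_j)`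
for `j, l ≥ 2`.
Combined with antisymmetry this gives `c(e_{p+2}, e_q) = (-1)ᵖ c(e₂, e_{p+q})`, so that block is
determined by the numbers `c(e₂, e_t)`, which vanish for odd `t` (as `c(e₂, e_t) = -c(e₂, e_t)`)
and are the coordinates along the forms `ω_k`. The first row is a coboundary up to its last
entry, the coordinate along `e¹ ∧ eⁿ`. Conversely, the entries `c(e₁, eₙ)` and `c(e₂, e_{2k-1})`
vanish on coboundaries, which makes the classes independent.
-/

/-- Structure constants of `𝔪₀(n)` with respect to the (zero-based) basis
`e₁, …, eₙ`: `[e₁, eᵢ] = e_{i+1}` for `2 ≤ i ≤ n-1`, all other brackets zero. -/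
def m0c (K : Type*) [Field K] (n : ℕ) (i j l : Fin n) : K :=
  (if i.val = 0 ∧ 1 ≤ j.val ∧ l.val = j.val + 1 then 1 else 0)
  - (if j.val = 0 ∧ 1 ≤ i.val ∧ l.val = i.val + 1 then 1 else 0)

/-- A 2-cochain on `𝔪₀(n)`, given by its matrix `a i j = c(eᵢ, eⱼ)`, is closed
(a Chevalley–Eilenberg 2-cocycle) iff `c([eᵢ,eⱼ],eₗ) + c([eⱼ,eₗ],eᵢ) + c([eₗ,eᵢ],eⱼ) = 0`. -/
def m0Closed (K : Type*) [Field K] (n : ℕ) (a : Fin n → Fin n → K) : Prop :=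
  ∀ i j l : Fin n,
    (∑ m, m0c K n i j m * a m l) + (∑ m, m0c K n j l m * a m i)
      + (∑ m, m0c K n l i m * a m j) = 0

/-- The matrix (in the zero-based basis `e₁, …, eₙ`) of the `⌊(n+1)/2⌋` cocycles:
`e¹ ∧ eⁿ` (for `k = 0`) and
`(1/2) ∑_{i=2}^{2k'-1} (-1)ⁱ eⁱ ∧ e^{2k'+1-i}` for `k' = k+1 = 2, …, ⌊(n+1)/2⌋`. -/
def m0Omega (K : Type*) [Field K] (n : ℕ) (k : Fin ((n + 1) / 2)) (p q : Fin n) : K :=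
  if k.val = 0 then
    (if p.val = 0 ∧ q.val = n - 1 then 1
     else if q.val = 0 ∧ p.val = n - 1 then -1 else 0)
  else
    (if p.val + q.val = 2 * (k.val + 1) - 1 ∧ 1 ≤ p.val ∧ p.val ≤ 2 * (k.val + 1) - 2
      then (-1 : K) ^ (p.val + 1) else 0)

namespace M0

variable {K : Type*} [Field K] {n : ℕ}

/- Cochains are read through their extensions by zero to `ℕ`-indices, so that the nonexistent
`e_{n+1}` needs no case split. -/
def extend (g : Fin n → K) (t : ℕ) : K := if h : t < n then g ⟨t, h⟩ else 0

def extend₂ (a : Fin n → Fin n → K) (p q : ℕ) : K :=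
  if h : p < n ∧ q < n then a ⟨p, h.1⟩ ⟨q, h.2⟩ else 0

lemma extend_val (g : Fin n → K) (i : Fin n) : extend g i = g i := by
  simp [extend]

lemma extend_of_le (g : Fin n → K) {t : ℕ} (ht : n ≤ t) : extend g t = 0 := by
  simp [extend, not_lt.2 ht]

lemma extend_mk (g : ℕ → K) (t : ℕ) :
    extend (fun i : Fin n => g i) t = if t < n then g t else 0 := by
  unfold extend; split_ifs <;> rfl

lemma extend₂_val (a : Fin n → Fin n → K) (i j : Fin n) : extend₂ a i j = a i j := by
  simp [extend₂]

lemma extend₂_of_le (a : Fin n → Fin n → K) {p q : ℕ} (h : n ≤ p ∨ n ≤ q) :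
    extend₂ a p q = 0 := by
  unfold extend₂; rw [dif_neg]; omega

lemma extend_col_eq_extend₂ (a : Fin n → Fin n → K) (j : Fin n) (t : ℕ) :
    extend (fun i => a i j) t = extend₂ a t j := by
  simp [extend, extend₂, j.isLt]

lemma extend₂_antisymm {a : Fin n → Fin n → K} (ha : ∀ i j, a i j = - a j i) (p q : ℕ) :
    extend₂ a p q = - extend₂ a q p := by
  unfold extend₂
  by_cases h : p < n ∧ q < n
  · rw [dif_pos h, dif_pos h.symm]; exact ha _ _
  · rw [dif_neg h, dif_neg (mt And.symm h), neg_zero]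

lemma sum_ite_val_eq_extend (g : Fin n → K) (t : ℕ) :
    (∑ m : Fin n, if m.val = t then g m else 0) = extend g t := by
  unfold extend
  split_ifs with h
  · rw [Finset.sum_eq_single_of_mem ⟨t, h⟩ (Finset.mem_univ _)]
    · simp
    · intro m _ hm; rw [if_neg (fun hmt => hm (Fin.ext hmt))]
  · exact Finset.sum_eq_zero fun m _ => if_neg (by omega)

lemma sum_m0c_mul (i j : Fin n) (g : Fin n → K) :
    ∑ m, m0c K n i j m * g m =
      (if i.val = 0 ∧ 1 ≤ j.val then extend g (j.val + 1) else 0)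
        - (if j.val = 0 ∧ 1 ≤ i.val then extend g (i.val + 1) else 0) := by
  have h (P : Prop) [Decidable P] (t : ℕ) :
      ∑ m : Fin n, (if P ∧ m.val = t then (1 : K) else 0) * g m = if P then extend g t else 0 := by
    rw [← sum_ite_val_eq_extend]
    split_ifs with hP <;> simp [hP]
  simp only [m0c, sub_mul, Finset.sum_sub_distrib, ← and_assoc, h]

lemma m0Closed_iff (a : Fin n → Fin n → K) :
    m0Closed K n a ↔ ∀ j l : Fin n, 1 ≤ j.val → 1 ≤ l.val →
      extend₂ a (j.val + 1) l = extend₂ a (l.val + 1) j := by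
  simp only [m0Closed, sum_m0c_mul, extend_col_eq_extend₂]
  constructor
  · intro hc j l hj hl
    have h := hc ⟨0, by omega⟩ j l
    simp only [true_and, hj, hl, if_true] at h
    rw [if_neg (by omega), if_neg (by omega), if_neg (by omega), if_neg (by omega)] at h
    linear_combination h
  · intro hE i j l
    -- each branch is contradictory, an instance of `hE`, or has two of `i, j, l` equal to `0`
    split_ifs <;>
      first
      | ring1
      | (exfalso; omega)
      | linear_combination hE j l (by omega) (by omega)
      | linear_combination hE l j (by omega) (by omega)
      | linear_combination hE i l (by omega) (by omega)
      | linear_combination hE l i (by omega) (by omega)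
      | linear_combination hE i j (by omega) (by omega)
      | linear_combination hE j i (by omega) (by omega)
      | (rw [show i = j from Fin.ext (by omega)]; ring1)
      | (rw [show j = l from Fin.ext (by omega)]; ring1)
      | (rw [show l = i from Fin.ext (by omega)]; ring1)

/- `m0Omega` on `ℕ`-indices, with the shift `k + 1` and the truncated subtractions removed. -/
variable (K) in
def omegaNat (n k p q : ℕ) : K :=
  if k = 0 then (if p = 0 ∧ q = n - 1 then 1 else if q = 0 ∧ p = n - 1 then -1 else 0)
  else if 1 ≤ p ∧ 1 ≤ q ∧ p + q = 2 * k + 1 then (-1) ^ (p + 1) else 0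

lemma extend₂_m0Omega (k : Fin ((n + 1) / 2)) (p q : ℕ) :
    extend₂ (m0Omega K n k) p q = omegaNat K n k p q := by
  have hk := k.isLt
  unfold extend₂
  split_ifs with h
  · simp only [m0Omega, omegaNat]
    split_ifs <;> first | rfl | (exfalso; omega)
  · unfold omegaNat
    split_ifs <;> first | rfl | (exfalso; omega)

lemma m0Omega_eq_omegaNat (k : Fin ((n + 1) / 2)) (i j : Fin n) :
    m0Omega K n k i j = omegaNat K n k i j := by
  rw [← extend₂_val (m0Omega K n k), extend₂_m0Omega]

lemma m0Closed_m0Omega (k : Fin ((n + 1) / 2)) : m0Closed K n (m0Omega K n k) := by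
  rw [m0Closed_iff]
  intro j l hj hl
  rw [extend₂_m0Omega, extend₂_m0Omega]
  unfold omegaNat
  split_ifs <;> first
    | rfl
    | (exfalso; omega)
    | (exfalso; tauto)
    | rw [neg_one_pow_eq_pow_mod_two, neg_one_pow_eq_pow_mod_two (l + 1 + 1)]; congr 1; omega

lemma sum_mul_m0Omega (coef : Fin ((n + 1) / 2) → K) (i j : Fin n) :
    ∑ k, coef k * m0Omega K n k i j =
      extend coef 0 * omegaNat K n 0 i j + extend coef ((i.val + j.val) / 2) *
        if 1 ≤ i.val ∧ 1 ≤ j.val ∧ (i.val + j.val) % 2 = 1 then (-1) ^ (i.val + 1) else 0 := by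
  have hterm (k : Fin ((n + 1) / 2)) : coef k * m0Omega K n k i j =
      (if k.val = 0 then coef k else 0) * omegaNat K n 0 i j
        + (if k.val = (i.val + j.val) / 2 then coef k else 0) *
          if 1 ≤ i.val ∧ 1 ≤ j.val ∧ (i.val + j.val) % 2 = 1 then (-1) ^ (i.val + 1) else 0 := by
    rw [m0Omega_eq_omegaNat]
    unfold omegaNat
    split_ifs <;> first | ring1 | (exfalso; omega)
  simp only [hterm, Finset.sum_add_distrib, ← Finset.sum_mul, sum_ite_val_eq_extend]

lemma coef_eq_zero_of_sum_mul_m0Omega_eq (coef : Fin ((n + 1) / 2) → K) (f : Fin n → K)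
    (h : ∀ i j, ∑ k, coef k * m0Omega K n k i j = ∑ m, m0c K n i j m * f m) : coef = 0 := by
  funext k
  rw [Pi.zero_apply, ← extend_val coef k]
  have hk := k.isLt
  rcases Nat.eq_zero_or_pos k.val with hk0 | hk0
  · have h0 := h ⟨0, by omega⟩ ⟨n - 1, by omega⟩
    rw [sum_mul_m0Omega, sum_m0c_mul] at h0
    simpa [omegaNat, hk0, extend_of_le f (show n ≤ n - 1 + 1 by omega)] using h0
  · have h1 := h ⟨1, by omega⟩ ⟨2 * k, by omega⟩
    rw [sum_mul_m0Omega, sum_m0c_mul] at h1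
    simpa [omegaNat, show (1 + 2 * k.val) / 2 = k by omega, hk0.ne', show 1 ≤ 2 * k.val by omega]
      using h1

lemma extend₂_succ_eq {a : Fin n → Fin n → K} (ha : ∀ i j, a i j = - a j i)
    (hc : m0Closed K n a) (p q : ℕ) (hq : 1 ≤ q) :
    extend₂ a (p + 1) q = (-1) ^ p * extend₂ a 1 (p + q) := by
  induction p generalizing q with
  | zero => simp
  | succ p ih =>
    by_cases hpq : p + 1 < n ∧ q < n
    · have hcyc := (m0Closed_iff a).1 hc ⟨p + 1, hpq.1⟩ ⟨q, hpq.2⟩ (by simp) hq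
      simp only at hcyc
      rw [hcyc, extend₂_antisymm ha, ih (q + 1) (by omega), pow_succ, ← add_assoc, add_right_comm p 1 q]
      ring
    · rw [extend₂_of_le a (by omega), extend₂_of_le a (by omega), mul_zero]

lemma extend₂_one_of_odd [CharZero K] {a : Fin n → Fin n → K} (ha : ∀ i j, a i j = - a j i)
    (hc : m0Closed K n a) (t : ℕ) (ht : t % 2 = 1) : extend₂ a 1 t = 0 := by
  obtain ⟨u, rfl⟩ : ∃ u, t = 2 * u + 1 := ⟨t / 2, by omega⟩
  have h := extend₂_succ_eq ha hc (2 * u) 1 le_rfl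
  rw [pow_mul, neg_one_sq, one_pow, one_mul] at h
  have hanti := extend₂_antisymm ha 1 (2 * u + 1)
  rwa [h, CharZero.eq_neg_self_iff] at hanti

lemma extend₂_of_one_le [CharZero K] {a : Fin n → Fin n → K} (ha : ∀ i j, a i j = - a j i)
    (hc : m0Closed K n a) {p q : ℕ} (hp : 1 ≤ p) (hq : 1 ≤ q) :
    extend₂ a p q =
      if (p + q) % 2 = 1 then (-1) ^ (p + 1) * extend₂ a 1 (p + q - 1) else 0 := by
  obtain ⟨p, rfl⟩ : ∃ p', p = p' + 1 := ⟨p - 1, by omega⟩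
  rw [extend₂_succ_eq ha hc p q hq, show p + 1 + q - 1 = p + q by omega]
  split_ifs with h
  · rw [neg_one_pow_eq_pow_mod_two, neg_one_pow_eq_pow_mod_two (p + 1 + 1)]
    congr 2
    omega
  · rw [extend₂_one_of_odd ha hc _ (by omega), mul_zero]

lemma exists_eq_sum_mul_m0Omega_add_coboundary [CharZero K] {a : Fin n → Fin n → K}
    (ha : ∀ i j, a i j = - a j i) (hc : m0Closed K n a) :
    ∃ (coef : Fin ((n + 1) / 2) → K) (f : Fin n → K),
      ∀ i j, a i j = ∑ k, coef k * m0Omega K n k i j + ∑ m, m0c K n i j m * f m := by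
  -- the coefficients are the entries `c(e₁, eₙ)` and `c(e₂, e_{2k-1})`; `f` absorbs the rest of
  -- the first row
  let c (t : ℕ) : K := if t = 0 then extend₂ a 0 (n - 1) else extend₂ a 1 (2 * t)
  let g (t : ℕ) : K := if 2 ≤ t then extend₂ a 0 (t - 1) else 0
  refine ⟨fun k => c k, fun m => g m, fun i j => ?_⟩
  rw [sum_mul_m0Omega, sum_m0c_mul, ← extend₂_val a]
  simp only [extend_mk]
  have h00 : extend₂ a 0 0 = 0 := CharZero.eq_neg_self_iff.1 (extend₂_antisymm ha 0 0)
  obtain ⟨i, hi⟩ := i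
  obtain ⟨j, hj⟩ := j
  simp only [omegaNat, c, g]
  have hn0 : 0 < (n + 1) / 2 := by omega
  rcases Nat.eq_zero_or_pos i with rfl | hi0 <;> rcases Nat.eq_zero_or_pos j with rfl | hj0
  · by_cases hn1 : n - 1 = 0
    · simp [hn0, hn1]
    · simp [hn0, h00, Ne.symm hn1]
  · by_cases hjn : j = n - 1
    · simp [hn0, hjn, show ¬(n - 1 + 1 < n) by omega]
    · simp [hn0, hj0.ne', hjn, show 1 ≤ j from hj0, show j + 1 < n by omega]
  · rw [extend₂_antisymm ha i 0]
    by_cases hin : i = n - 1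
    · simp [hn0, hin, show n - 1 ≠ 0 by omega, show ¬(n - 1 + 1 < n) by omega]
    · simp [hn0, hi0.ne', hin, show 1 ≤ i from hi0, show i + 1 < n by omega]
  · rw [extend₂_of_one_le ha hc hi0 hj0]
    by_cases hodd : (i + j) % 2 = 1
    · by_cases hlt : (i + j) / 2 < (n + 1) / 2
      · simp [hodd, hlt, show 1 ≤ i from hi0, show 1 ≤ j from hj0, hi0.ne', hj0.ne', mul_comm,
          show (i + j) / 2 ≠ 0 by omega, show 2 * ((i + j) / 2) = i + j - 1 by omega]
      · simp [hodd, hlt, extend₂_of_le a (show n ≤ 1 ∨ n ≤ i + j - 1 by omega), hi0.ne', hj0.ne']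
    · simp [hodd, hi0.ne', hj0.ne']

end M0

theorem stmt9_general (K : Type*) [Field K] [CharZero K] (n : ℕ) :
    (∀ k, m0Closed K n (m0Omega K n k)) ∧
    (∀ a : Fin n → Fin n → K, (∀ i j, a i j = - a j i) → m0Closed K n a →
      ∃ (coef : Fin ((n + 1) / 2) → K) (f : Fin n → K),
        ∀ i j, a i j = (∑ k, coef k * m0Omega K n k i j) + ∑ m, m0c K n i j m * f m) ∧
    (∀ (coef : Fin ((n + 1) / 2) → K) (f : Fin n → K),
      (∀ i j, (∑ k, coef k * m0Omega K n k i j) = ∑ m, m0c K n i j m * f m) →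
      coef = 0) :=
  ⟨M0.m0Closed_m0Omega, fun _ ha hc => M0.exists_eq_sum_mul_m0Omega_add_coboundary ha hc,
    M0.coef_eq_zero_of_sum_mul_m0Omega_eq⟩

/-- For `n ≥ 3`, `H²(𝔪₀(n); K)` has dimension `⌊(n+1)/2⌋`, with a
basis given by the classes of the cocycles `e¹ ∧ eⁿ` and
`(1/2) ∑_{i=2}^{2k-1} (-1)ⁱ eⁱ ∧ e^{2k+1-i}`, `k = 2, …, ⌊(n+1)/2⌋`:
(i) each of these forms is a cocycle; (ii) every antisymmetric closed 2-form is a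
linear combination of them plus a coboundary `δf(eᵢ,eⱼ) = f([eᵢ,eⱼ])`; (iii) they
are linearly independent modulo coboundaries. -/
theorem stmt9 (K : Type*) [Field K] [CharZero K] (n : ℕ) (hn : 3 ≤ n) :
    (∀ k, m0Closed K n (m0Omega K n k)) ∧
    (∀ a : Fin n → Fin n → K, (∀ i j, a i j = - a j i) → m0Closed K n a →
      ∃ (coef : Fin ((n + 1) / 2) → K) (f : Fin n → K),
        ∀ i j, a i j = (∑ k, coef k * m0Omega K n k i j) + ∑ m, m0c K n i j m * f m) ∧
    (∀ (coef : Fin ((n + 1) / 2) → K) (f : Fin n → K),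
      (∀ i j, (∑ k, coef k * m0Omega K n k i j) = ∑ m, m0c K n i j m * f m) →
      coef = 0) :=
  stmt9_general K n
end

section
/- For $n\ge 5$, $\dim H^2(\mathfrak{m}_2(n);\mathbb{K})=3$, with basis given by the cohomology classes of $e^1\wedge e^n + e^2\wedge e^{n-1}$, $e^2\wedge e^3$, and $e^2\wedge e^5 - e^3\wedge e^4$. -/
/-- Structure constants of `𝔪₂(n)` with respect to the (zero-based) basis
`e₁, …, eₙ`: `[e₁, eᵢ] = e_{i+1}` for `2 ≤ i ≤ n-1` and `[e₂, eⱼ] = e_{j+2}` for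
`3 ≤ j ≤ n-2`, all other brackets zero. -/
def m2c (K : Type*) [Field K] (n : ℕ) (i j l : Fin n) : K :=
  ((if i.val = 0 ∧ 1 ≤ j.val ∧ l.val = j.val + 1 then 1 else 0)
    + (if i.val = 1 ∧ 2 ≤ j.val ∧ l.val = j.val + 2 then 1 else 0))
  - ((if j.val = 0 ∧ 1 ≤ i.val ∧ l.val = i.val + 1 then 1 else 0)
    + (if j.val = 1 ∧ 2 ≤ i.val ∧ l.val = i.val + 2 then 1 else 0))

/-- Chevalley–Eilenberg closedness for a 2-cochain on `𝔪₂(n)` given by its matrix. -/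
def m2Closed (K : Type*) [Field K] (n : ℕ) (a : Fin n → Fin n → K) : Prop :=
  ∀ i j l : Fin n,
    (∑ m, m2c K n i j m * a m l) + (∑ m, m2c K n j l m * a m i)
      + (∑ m, m2c K n l i m * a m j) = 0

/-- The matrices of the three cocycles `e¹∧eⁿ + e²∧e^{n-1}`, `e²∧e³` and
`e²∧e⁵ - e³∧e⁴` (zero-based indices). -/
def m2Omega (K : Type*) [Field K] (n : ℕ) (k : Fin 3) (p q : Fin n) : K :=
  if k.val = 0 then
    (if (p.val = 0 ∧ q.val = n - 1) ∨ (p.val = 1 ∧ q.val = n - 2) then 1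
     else if (q.val = 0 ∧ p.val = n - 1) ∨ (q.val = 1 ∧ p.val = n - 2) then -1 else 0)
  else if k.val = 1 then
    (if p.val = 1 ∧ q.val = 2 then 1 else if p.val = 2 ∧ q.val = 1 then -1 else 0)
  else
    (if p.val = 1 ∧ q.val = 4 then 1 else if p.val = 4 ∧ q.val = 1 then -1
     else if p.val = 2 ∧ q.val = 3 then -1 else if p.val = 3 ∧ q.val = 2 then 1 else 0)

/-!
The cocycle condition is alternating in its three arguments, so it only has to be imposed on
increasing triples, where it becomes three families of linear relations among the entries
`A p q` of the cochain (`CocycleEqns`). The relations coming from `(0, j, l)` and `(1, j, l)`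
kill the block `p, q ≥ 2` apart from `A 2 3`, and the one from `(0, 1, l)` expresses row `1`
through rows `0` and `2`. So a cocycle is determined by row `0`, `A 1 2` and `A 2 3`: the
coboundary of `f m = A 0 (m - 1)` matches row `0` up to `A 0 (n - 1)`, and the three cocycles
`ω` account for `A 0 (n - 1)`, `A 1 2 - A 0 3` and `A 2 3`. Conversely, if a combination of the
`ω` is a coboundary, its entries at `(2, 3)` and `(0, n - 1)` vanish and those at `(1, 2)` and
`(0, 3)` agree, which kills all three coefficients.
-/

open Finset

theorem eq_zero_of_alternating {ι M : Type*} [LinearOrder ι] [AddCommGroup M]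
    {f : ι → ι → ι → M} (swap₁₂ : ∀ i j l, f j i l = -f i j l)
    (swap₂₃ : ∀ i j l, f i l j = -f i j l) (diag : ∀ i l, f i i l = 0)
    (h : ∀ i j l, i < j → j < l → f i j l = 0) (i j l : ι) : f i j l = 0 := by
  have swap₁₃ : ∀ i j l, f l j i = -f i j l := fun i j l => by
    rw [swap₁₂, swap₂₃, swap₁₂, neg_neg]
  rcases eq_or_ne i j with rfl | hij
  · exact diag i l
  rcases eq_or_ne j l with rfl | hjl
  · rw [swap₁₂, swap₂₃, diag, neg_zero, neg_zero]
  rcases eq_or_ne i l with rfl | hil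
  · rw [swap₂₃, diag, neg_zero]
  rcases hij.lt_or_gt with hij | hji
  · rcases hjl.lt_or_gt with hjl | hlj
    · exact h i j l hij hjl
    rcases hil.lt_or_gt with hil | hli
    · rw [swap₂₃ i l j, h i l j hil hlj, neg_zero]
    · rw [swap₂₃ i l j, swap₁₂ l i j, h l i j hli hij, neg_zero, neg_zero]
  · rcases hjl.lt_or_gt with hjl | hlj
    · rcases hil.lt_or_gt with hil | hli
      · rw [swap₁₂ j i l, h j i l hji hil, neg_zero]
      · rw [swap₁₂ j i l, swap₂₃ j l i, h j l i hjl hli, neg_zero, neg_zero]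
    · rw [swap₁₃ l j i, h l j i hlj hji, neg_zero]

namespace M2

section Extension

variable {M : Type*} [Zero M] {n : ℕ}

def natVec (g : Fin n → M) (v : ℕ) : M := if h : v < n then g ⟨v, h⟩ else 0

def natMat (a : Fin n → Fin n → M) (p q : ℕ) : M := natVec (fun i => natVec (a i) q) p

lemma natVec_of_le (g : Fin n → M) {v : ℕ} (h : n ≤ v) : natVec g v = 0 := by
  simp [natVec, not_lt.mpr h]

lemma natMat_of_lt (a : Fin n → Fin n → M) {p q : ℕ} (hp : p < n) (hq : q < n) :
    natMat a p q = a ⟨p, hp⟩ ⟨q, hq⟩ := by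
  simp [natMat, natVec, hp, hq]

lemma natMat_val (a : Fin n → Fin n → M) (i j : Fin n) : natMat a i j = a i j :=
  natMat_of_lt a i.isLt j.isLt

lemma natMat_of_le_right (a : Fin n → Fin n → M) (p : ℕ) {q : ℕ} (h : n ≤ q) :
    natMat a p q = 0 := by
  simp only [natMat, natVec, dif_neg (not_lt.mpr h), dite_eq_ite, ite_self]

lemma natMat_of_not_lt (a : Fin n → Fin n → M) {p q : ℕ} (h : ¬(p < n ∧ q < n)) :
    natMat a p q = 0 := by
  rcases not_and_or.mp h with hp | hq
  · exact natVec_of_le _ (not_lt.mp hp)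
  · exact natMat_of_le_right a p (not_lt.mp hq)

lemma natMat_swap {G : Type*} [AddGroup G] {a : Fin n → Fin n → G} (ha : ∀ i j, a i j = -a j i)
    (p q : ℕ) : natMat a p q = -natMat a q p := by
  by_cases h : p < n ∧ q < n
  · rw [natMat_of_lt a h.1 h.2, natMat_of_lt a h.2 h.1]
    exact ha _ _
  · rw [natMat_of_not_lt a h, natMat_of_not_lt a (fun h' => h ⟨h'.2, h'.1⟩), neg_zero]

lemma sum_ite_val_eq {R : Type*} [AddCommMonoid R] (g : Fin n → R) (v : ℕ) :
    ∑ m : Fin n, (if m.val = v then g m else 0) = natVec g v := by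
  unfold natVec
  split_ifs with h
  · rw [sum_eq_single ⟨v, h⟩ (fun m _ hm => if_neg fun hv => hm (Fin.ext hv)) (by simp)]
    simp
  · exact sum_eq_zero fun m _ => if_neg fun hv : m.val = v => h (hv ▸ m.isLt)

end Extension

/-- `g ([eᵢ, eⱼ])` for a linear form `g` on `𝔪₂(n)`, in zero-based indices. -/
def evalBracket {M : Type*} [AddGroup M] (g : ℕ → M) (i j : ℕ) : M :=
  (if i = 0 ∧ 1 ≤ j then g (j + 1) else 0) + (if i = 1 ∧ 2 ≤ j then g (j + 2) else 0)
    - (if j = 0 ∧ 1 ≤ i then g (i + 1) else 0) - (if j = 1 ∧ 2 ≤ i then g (i + 2) else 0)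

variable {K : Type*} [Field K] {n : ℕ}

def m2Coboundary (f : Fin n → K) (i j : Fin n) : K := ∑ m, m2c K n i j m * f m

lemma m2Coboundary_eq (f : Fin n → K) (i j : Fin n) :
    m2Coboundary f i j = evalBracket (natVec f) i j := by
  simp only [m2Coboundary, m2c, evalBracket, sub_mul, add_mul, ite_mul, one_mul, zero_mul,
    ite_and, sum_sub_distrib, sum_add_distrib, sum_ite_irrel, sum_const_zero, sum_ite_val_eq]
  ring

lemma m2c_swap (i j l : Fin n) : m2c K n j i l = -m2c K n i j l := by
  unfold m2c; ring

lemma m2Coboundary_swap (f : Fin n → K) (i j : Fin n) :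
    m2Coboundary f j i = -m2Coboundary f i j := by
  simp only [m2Coboundary, m2c_swap i j, neg_mul, sum_neg_distrib]

lemma m2Coboundary_self (f : Fin n → K) (i : Fin n) : m2Coboundary f i i = 0 := by
  simp [m2Coboundary, m2c]

/-- The Chevalley–Eilenberg differential of a 2-cochain, up to sign. -/
def m2d : (Fin n → Fin n → K) →ₗ[K] Fin n → Fin n → Fin n → K where
  toFun a i j l :=
    m2Coboundary (a · l) i j + m2Coboundary (a · i) j l + m2Coboundary (a · j) l i
  map_add' a b := by
    ext i j l
    simp only [m2Coboundary, Pi.add_apply, mul_add, sum_add_distrib]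
    ring
  map_smul' c a := by
    ext i j l
    simp only [m2Coboundary, Pi.smul_apply, smul_eq_mul, RingHom.id_apply, mul_left_comm _ c,
      ← mul_sum]
    ring

lemma m2Closed_iff_mem_ker (a : Fin n → Fin n → K) :
    m2Closed K n a ↔ a ∈ LinearMap.ker (m2d (K := K) (n := n)) := by
  simp only [LinearMap.mem_ker, funext_iff, Pi.zero_apply]
  rfl

lemma m2d_swap₁₂ (a : Fin n → Fin n → K) (i j l : Fin n) : m2d a j i l = -m2d a i j l := by
  simp only [m2d, LinearMap.coe_mk, AddHom.coe_mk]
  rw [m2Coboundary_swap _ j i, m2Coboundary_swap _ i l, m2Coboundary_swap _ l j]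
  ring

lemma m2d_swap₂₃ (a : Fin n → Fin n → K) (i j l : Fin n) : m2d a i l j = -m2d a i j l := by
  simp only [m2d, LinearMap.coe_mk, AddHom.coe_mk]
  rw [m2Coboundary_swap _ i l, m2Coboundary_swap _ l j, m2Coboundary_swap _ j i]
  ring

lemma m2d_self (a : Fin n → Fin n → K) (i l : Fin n) : m2d a i i l = 0 := by
  simp only [m2d, LinearMap.coe_mk, AddHom.coe_mk]
  rw [m2Coboundary_self, m2Coboundary_swap _ l i]
  ring

lemma m2d_eq (a : Fin n → Fin n → K) (i j l : Fin n) :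
    m2d a i j l = evalBracket (natMat a · l) i j + evalBracket (natMat a · i) j l
      + evalBracket (natMat a · j) l i := by
  simp only [m2d, LinearMap.coe_mk, AddHom.coe_mk, m2Coboundary_eq]
  congr <;> ext p <;> simp [natVec]

/-- The cocycle condition of `𝔪₂(n)` on the increasing triples `(0, 1, l)`, `(0, j, l)` and
`(1, j, l)` with `2 ≤ j < l`; on all other increasing triples it holds trivially. -/
structure CocycleEqns {M : Type*} [AddCommGroup M] (n : ℕ) (A : ℕ → ℕ → M) : Prop where
  zero_one : ∀ l, 2 ≤ l → l < n → A 2 l + A (l + 2) 0 - A (l + 1) 1 = 0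
  zero : ∀ j l, 2 ≤ j → j < l → l < n → A (j + 1) l - A (l + 1) j = 0
  one : ∀ j l, 2 ≤ j → j < l → l < n → A (j + 2) l - A (l + 2) j = 0

theorem m2Closed_iff_cocycleEqns (a : Fin n → Fin n → K) :
    m2Closed K n a ↔ CocycleEqns n (natMat a) := by
  rw [m2Closed_iff_mem_ker, LinearMap.mem_ker]
  constructor
  · intro h
    have eqn (i j l : ℕ) (hij : i < j) (hjl : j < l) (hl : l < n) :=
      congr_fun (congr_fun (congr_fun h ⟨i, by omega⟩) ⟨j, by omega⟩) ⟨l, hl⟩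
    refine ⟨fun l hl hln => ?_, fun j l hj hjl hln => ?_, fun j l hj hjl hln => ?_⟩
    · simpa [m2d_eq, evalBracket, hl, show 1 ≤ l by omega, show l ≠ 0 by omega,
        show l ≠ 1 by omega, sub_eq_add_neg] using eqn 0 1 l one_pos (by omega) hln
    · simpa [m2d_eq, evalBracket, show 1 ≤ j by omega, show 1 ≤ l by omega, show j ≠ 0 by omega,
        show l ≠ 0 by omega, show j ≠ 1 by omega, show l ≠ 1 by omega, sub_eq_add_neg]
        using eqn 0 j l (by omega) hjl hln
    · simpa [m2d_eq, evalBracket, hj, show 2 ≤ l by omega, show j ≠ 0 by omega,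
        show l ≠ 0 by omega, show j ≠ 1 by omega, show l ≠ 1 by omega, sub_eq_add_neg]
        using eqn 1 j l (by omega) hjl hln
  · intro hA
    ext i j l
    refine eq_zero_of_alternating (m2d_swap₁₂ a) (m2d_swap₂₃ a) (m2d_self a)
      (fun i j l hij hjl => ?_) i j l
    rw [Fin.lt_def] at hij hjl
    have hj0 : j.val ≠ 0 := by omega
    have hl0 : l.val ≠ 0 := by omega
    have hl1 : l.val ≠ 1 := by omega
    have hl2 : 2 ≤ l.val := by omega
    rw [m2d_eq]
    obtain hi | hi | hi : i.val = 0 ∨ i.val = 1 ∨ 2 ≤ i.val := by omega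
    · obtain hj | hj : j.val = 1 ∨ 2 ≤ j.val := by omega
      · simpa [evalBracket, hi, hj, hl0, hl1, hl2, show 1 ≤ l.val by omega, sub_eq_add_neg]
          using hA.zero_one l (by omega) l.isLt
      · simpa [evalBracket, hi, hj0, hl0, hl1, show 1 ≤ j.val by omega, show 1 ≤ l.val by omega,
          show j.val ≠ 1 by omega, sub_eq_add_neg] using hA.zero j l hj hjl l.isLt
    · simpa [evalBracket, hi, hj0, hl0, hl1, hl2, show 2 ≤ j.val by omega,
        show j.val ≠ 1 by omega, sub_eq_add_neg] using hA.one j l (by omega) hjl l.isLt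
    · simp [evalBracket, hj0, hl0, hl1, show i.val ≠ 0 by omega, show i.val ≠ 1 by omega,
        show j.val ≠ 1 by omega]

section Vanishing

variable {M : Type*} [AddCommGroup M] [IsAddTorsionFree M] {A : ℕ → ℕ → M}

theorem row_two_eq_zero (hA : CocycleEqns n A) (anti : ∀ p q, A p q = -A q p)
    (out : ∀ p q, n ≤ q → A p q = 0) {t : ℕ} (ht2 : 2 ≤ t) (ht3 : t ≠ 3) : A 2 t = 0 := by
  rcases le_or_gt n t with htn | htn
  · exact out 2 t htn
  obtain rfl | rfl | rfl | h6 : t = 2 ∨ t = 4 ∨ t = 5 ∨ 6 ≤ t := by omega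
  · exact self_eq_neg.mp (anti 2 2)
  · have h := hA.zero 2 3 le_rfl (by norm_num) (by omega)
    linear_combination (norm := module) anti 2 4 + h - self_eq_neg.mp (anti 3 3)
  · have h₀ := hA.zero 2 4 le_rfl (by norm_num) (by omega)
    have h₁ := hA.one 2 3 le_rfl (by norm_num) (by omega)
    refine self_eq_neg.mp ?_
    linear_combination (norm := module) (2 : ℤ) • anti 2 5 + h₀ + h₁ - anti 4 3
  · obtain ⟨s, rfl⟩ := Nat.exists_eq_add_of_le' h6
    have h₁ : A 4 (s + 4) - A (s + 6) 2 = 0 := hA.one 2 (s + 4) le_rfl (by omega) (by omega)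
    have h₀ : A 3 (s + 5) - A (s + 6) 2 = 0 := hA.zero 2 (s + 5) le_rfl (by omega) (by omega)
    have h₀' : A 4 (s + 4) - A (s + 5) 3 = 0 := hA.zero 3 (s + 4) (by omega) (by omega) (by omega)
    refine self_eq_neg.mp ?_
    linear_combination (norm := module) (2 : ℤ) • anti 2 (s + 6) + h₁ + h₀ - h₀' - anti 3 (s + 5)

/-- The relation `A (p + 1) q = -A p (q + 1)` slides every entry of the block `p, q ≥ 2` onto
row `2`. -/
theorem eq_zero_of_two_le_of_lt (hA : CocycleEqns n A) (anti : ∀ p q, A p q = -A q p)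
    (out : ∀ p q, n ≤ q → A p q = 0) {p : ℕ} (hp : 2 ≤ p) :
    ∀ q, p < q → (p, q) ≠ (2, 3) → A p q = 0 := by
  induction p, hp using Nat.le_induction with
  | base => exact fun q hq h3 => row_two_eq_zero hA anti out hq.le (by simpa using h3)
  | succ p hp ih =>
    intro q hpq _
    rcases le_or_gt n q with hqn | hqn
    · exact out _ q hqn
    have h := hA.zero p q hp (by omega) hqn
    rw [anti (q + 1), ih (q + 1) (by omega) (by simp; omega), neg_zero, sub_zero] at h
    exact h

theorem lower_block_eq_zero (hA : CocycleEqns n A) (anti : ∀ p q, A p q = -A q p)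
    (out : ∀ p q, n ≤ q → A p q = 0) (h23 : A 2 3 = 0) {p q : ℕ} (hp : 2 ≤ p) (hq : 2 ≤ q) :
    A p q = 0 := by
  have upper {p q : ℕ} (hp : 2 ≤ p) (hpq : p < q) : A p q = 0 := by
    by_cases h : (p, q) = (2, 3)
    · obtain ⟨rfl, rfl⟩ := Prod.mk.inj h
      exact h23
    · exact eq_zero_of_two_le_of_lt hA anti out hp q hpq h
  rcases lt_trichotomy p q with hpq | rfl | hqp
  · exact upper hp hpq
  · exact self_eq_neg.mp (anti p p)
  · rw [anti, upper hq hqp, neg_zero]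

theorem eq_zero_of_cocycleEqns (hA : CocycleEqns n A) (anti : ∀ p q, A p q = -A q p)
    (out : ∀ p q, n ≤ q → A p q = 0) (h0 : ∀ q, A 0 q = 0) (h12 : A 1 2 = 0) (h23 : A 2 3 = 0)
    (p q : ℕ) : A p q = 0 := by
  have upper {p q : ℕ} (hpq : p < q) : A p q = 0 := by
    obtain rfl | rfl | hp := show p = 0 ∨ p = 1 ∨ 2 ≤ p by omega
    · exact h0 q
    · obtain rfl | hq := show q = 2 ∨ 3 ≤ q by omega
      · exact h12
      rcases le_or_gt n q with hqn | hqn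
      · exact out 1 q hqn
      obtain ⟨s, rfl⟩ := Nat.exists_eq_add_of_le' hq
      have h : A 2 (s + 2) + A (s + 4) 0 - A (s + 3) 1 = 0 :=
        hA.zero_one (s + 2) (by omega) (by omega)
      rw [lower_block_eq_zero hA anti out h23 le_rfl (by omega), anti (s + 4), h0, anti (s + 3),
        neg_zero, zero_add, sub_neg_eq_add, zero_add] at h
      exact h
    · exact lower_block_eq_zero hA anti out h23 hp (by omega)
  rcases lt_trichotomy p q with hpq | rfl | hqp
  · exact upper hpq
  · exact self_eq_neg.mp (anti p p)
  · rw [anti, upper hqp, neg_zero]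

end Vanishing

theorem cocycleEqns_evalBracket {M : Type*} [AddCommGroup M] (g : ℕ → M) :
    CocycleEqns n (evalBracket g) := by
  refine ⟨fun l hl _ => ?_, fun j l hj hjl _ => ?_, fun j l hj hjl _ => ?_⟩
  · simp [evalBracket, add_assoc, show l ≠ 0 by omega, show l ≠ 1 by omega, show 1 ≤ l by omega]
  all_goals simp [evalBracket, show j ≠ 0 by omega, show j ≠ 1 by omega, show l ≠ 0 by omega,
    show l ≠ 1 by omega]

lemma natMat_m2Coboundary (f : Fin n → K) :
    natMat (m2Coboundary f) = evalBracket (natVec f) := by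
  ext p q
  by_cases h : p < n ∧ q < n
  · rw [natMat_of_lt _ h.1 h.2]
    exact m2Coboundary_eq f ⟨p, h.1⟩ ⟨q, h.2⟩
  · rw [natMat_of_not_lt _ h, evalBracket]
    split_ifs <;> simp (disch := omega) [natVec_of_le]

theorem m2Closed_m2Coboundary (f : Fin n → K) : m2Closed K n (m2Coboundary f) := by
  rw [m2Closed_iff_cocycleEqns, natMat_m2Coboundary]
  exact cocycleEqns_evalBracket _

lemma m2Omega_swap (hn : 4 ≤ n) (k : Fin 3) (p q : Fin n) :
    m2Omega K n k p q = -m2Omega K n k q p := by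
  fin_cases k <;> simp only [m2Omega] <;> split_ifs <;> first | omega | simp

lemma natMat_m2Omega_eq_zero (k : Fin 3) {p q : ℕ} (hp : 2 ≤ p) (hq : 2 ≤ q) (hpq : 6 ≤ p + q) :
    natMat (m2Omega K n k) p q = 0 := by
  by_cases h : p < n ∧ q < n
  · rw [natMat_of_lt _ h.1 h.2]
    fin_cases k <;> simp only [m2Omega] <;> split_ifs <;> first | rfl | omega
  · exact natMat_of_not_lt _ h

theorem m2Closed_m2Omega (hn : 5 ≤ n) (k : Fin 3) : m2Closed K n (m2Omega K n k) := by
  rw [m2Closed_iff_cocycleEqns]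
  refine ⟨fun l hl hln => ?_, fun j l hj hjl _ => ?_, fun j l hj hjl _ => ?_⟩
  · simp only [natMat, natVec]
    fin_cases k <;> simp [m2Omega] <;> split_ifs <;> first | omega | simp
  all_goals rw [natMat_m2Omega_eq_zero k (by omega) (by omega) (by omega),
    natMat_m2Omega_eq_zero k (by omega) (by omega) (by omega), sub_zero]

theorem exists_eq_sum_m2Omega_add_m2Coboundary [CharZero K] (hn : 5 ≤ n)
    (a : Fin n → Fin n → K) (ha : ∀ i j, a i j = -a j i) (hc : m2Closed K n a) :
    ∃ (coef : Fin 3 → K) (f : Fin n → K),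
      ∀ i j, a i j = (∑ k, coef k * m2Omega K n k i j) + m2Coboundary f i j := by
  set A := natMat a
  set coef : Fin 3 → K := ![A 0 (n - 1), A 1 2 - A 0 3, -A 2 3]
  -- `m2Coboundary f` only reads `f` at indices `≥ 2`, where `m - 1` does not truncate.
  set f : Fin n → K := fun m => A 0 (m - 1)
  set b := a - ∑ k, coef k • m2Omega K n k - m2Coboundary f
  have hb (i j) : b i j = a i j - ((∑ k, coef k * m2Omega K n k i j) + m2Coboundary f i j) := by
    simp [b, Finset.sum_apply, sub_sub]
  refine ⟨coef, f, fun i j => ?_⟩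
  suffices natMat b i j = 0 by rwa [natMat_val, hb, sub_eq_zero] at this
  have hB : CocycleEqns n (natMat b) := by
    rw [← m2Closed_iff_cocycleEqns, m2Closed_iff_mem_ker]
    refine sub_mem (sub_mem ((m2Closed_iff_mem_ker a).1 hc) (sum_mem fun k _ => ?_))
      ((m2Closed_iff_mem_ker _).1 (m2Closed_m2Coboundary f))
    exact Submodule.smul_mem _ _ ((m2Closed_iff_mem_ker _).1 (m2Closed_m2Omega hn k))
  have anti (i j : Fin n) : b i j = -b j i := by
    have hω (k : Fin 3) := m2Omega_swap (K := K) (by omega) k i j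
    simp only [hb, ha i j, hω, m2Coboundary_swap f i j, mul_neg, sum_neg_distrib]
    ring
  have h0 (q : ℕ) : natMat b 0 q = 0 := by
    rcases le_or_gt n q with hq | hq
    · exact natMat_of_le_right _ _ hq
    rw [natMat_of_lt _ (by omega) hq, hb, m2Coboundary_eq, ← natMat_of_lt a]
    obtain rfl | rfl | hq' : q = 0 ∨ q = n - 1 ∨ 1 ≤ q ∧ q + 1 < n := by omega
    · simp [m2Omega, evalBracket, coef, show 0 ≠ n - 1 by omega,
        self_eq_neg.mp (natMat_swap ha 0 0)]
    · simp [m2Omega, evalBracket, natVec, coef, A, show n - 1 ≠ 0 by omega,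
        show 1 ≤ n - 1 by omega, show ¬(n - 1 + 1 < n) by omega]
    · simp [m2Omega, evalBracket, natVec, f, coef, A, hq', show q ≠ n - 1 by omega,
        show q ≠ 0 by omega, show 0 ≠ n - 2 by omega]
  have h12 : natMat b 1 2 = 0 := by
    rw [natMat_of_lt _ (by omega) (by omega), hb, m2Coboundary_eq, ← natMat_of_lt a]
    simp [Fin.sum_univ_three, m2Omega, evalBracket, natVec, f, coef, A, show 2 ≠ n - 2 by omega,
      show 4 < n by omega]
  have h23 : natMat b 2 3 = 0 := by
    rw [natMat_of_lt _ (by omega) (by omega), hb, m2Coboundary_eq, ← natMat_of_lt a]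
    simp [Fin.sum_univ_three, m2Omega, evalBracket, coef, A]
  exact eq_zero_of_cocycleEqns hB (natMat_swap anti) (fun p q => natMat_of_le_right b p)
    h0 h12 h23 i j

theorem coef_eq_zero_of_sum_m2Omega_eq_m2Coboundary (hn : 5 ≤ n) (coef : Fin 3 → K)
    (f : Fin n → K) (h : ∀ i j, ∑ k, coef k * m2Omega K n k i j = m2Coboundary f i j) :
    coef = 0 := by
  have eqn (p q : ℕ) (hp : p < n) (hq : q < n) := h ⟨p, hp⟩ ⟨q, hq⟩
  have h23 := eqn 2 3 (by omega) (by omega)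
  have h0 := eqn 0 (n - 1) (by omega) (by omega)
  have h12 := eqn 1 2 (by omega) (by omega)
  have h03 := eqn 0 3 (by omega) (by omega)
  simp [Fin.sum_univ_three, m2Omega, m2Coboundary_eq, evalBracket, show n - 1 + 1 = n by omega,
    natVec_of_le, show 2 ≠ n - 2 by omega, show 3 ≠ n - 1 by omega] at h23 h0 h12 h03
  ext k
  fin_cases k
  exacts [h0, h12.trans h03.symm, h23]

end M2

/-- For `n ≥ 5`, `dim H²(𝔪₂(n); K) = 3`, with basis given by the
classes of `e¹∧eⁿ + e²∧e^{n-1}`, `e²∧e³`, `e²∧e⁵ - e³∧e⁴`: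
(i) each is a cocycle; (ii) every antisymmetric closed 2-form is a linear
combination of them plus a coboundary; (iii) they are independent modulo
coboundaries. -/
theorem stmt10 (K : Type*) [Field K] [CharZero K] (n : ℕ) (hn : 5 ≤ n) :
    (∀ k, m2Closed K n (m2Omega K n k)) ∧
    (∀ a : Fin n → Fin n → K, (∀ i j, a i j = - a j i) → m2Closed K n a →
      ∃ (coef : Fin 3 → K) (f : Fin n → K),
        ∀ i j, a i j = (∑ k, coef k * m2Omega K n k i j) + ∑ m, m2c K n i j m * f m) ∧
    (∀ (coef : Fin 3 → K) (f : Fin n → K),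
      (∀ i j, (∑ k, coef k * m2Omega K n k i j) = ∑ m, m2c K n i j m * f m) →
      coef = 0) :=
  ⟨M2.m2Closed_m2Omega hn,
    fun a ha hc => M2.exists_eq_sum_m2Omega_add_m2Coboundary hn a ha hc,
    fun coef f h => M2.coef_eq_zero_of_sum_m2Omega_eq_m2Coboundary hn coef f h⟩
end

section
/- For $n\ge 5$, the cohomology classes of the cocycles $\Omega_{n+1}=\frac{1}{2}\sum_{i+j=n+1}(j-i)e^i\wedge e^j$, $e^2\wedge e^3$, and $e^2\wedge e^5 - 3e^3\wedge e^4$ form a basis of $H^2(\mathcal{V}_n;\mathbb{K})$; in particular $\dim H^2(\mathcal{V}_n)=3$. -/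
/-- Structure constants of `𝒱ₙ` with respect to the (zero-based) basis
`e₁, …, eₙ`: `[eᵢ, eⱼ] = (j-i) e_{i+j}` for `i+j ≤ n`, zero otherwise. -/
def Vc (K : Type*) [Field K] (n : ℕ) (i j l : Fin n) : K :=
  if l.val = i.val + j.val + 1 then (((j.val : ℤ) - (i.val : ℤ) : ℤ) : K) else 0

/-- Chevalley–Eilenberg closedness for a 2-cochain on `𝒱ₙ` given by its matrix. -/
def VClosed (K : Type*) [Field K] (n : ℕ) (a : Fin n → Fin n → K) : Prop :=
  ∀ i j l : Fin n,
    (∑ m, Vc K n i j m * a m l) + (∑ m, Vc K n j l m * a m i)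
      + (∑ m, Vc K n l i m * a m j) = 0

/-- The matrices of the three cocycles `Ω_{n+1} = (1/2) ∑_{i+j=n+1} (j-i) eⁱ∧eʲ`,
`e²∧e³` and `e²∧e⁵ - 3 e³∧e⁴` (zero-based indices). -/
def VOmega (K : Type*) [Field K] (n : ℕ) (k : Fin 3) (p q : Fin n) : K :=
  if k.val = 0 then
    (if p.val + q.val = n - 1 then (((q.val : ℤ) - (p.val : ℤ) : ℤ) : K) else 0)
  else if k.val = 1 then
    (if p.val = 1 ∧ q.val = 2 then 1 else if p.val = 2 ∧ q.val = 1 then -1 else 0)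
  else
    (if p.val = 1 ∧ q.val = 4 then 1 else if p.val = 4 ∧ q.val = 1 then -1
     else if p.val = 2 ∧ q.val = 3 then -3 else if p.val = 3 ∧ q.val = 2 then 3 else 0)

/-
Index the basis from 1 and grade cochains by weight: the entry `B(e_p, e_q)` has weight `p + q`,
and the cocycle identity on `(e_i, e_j, e_l)` only involves the weight `i + j + l`. Subtracting
the coboundary of `e_w ↦ B(e₁, e_{w-1}) / (w - 2)` clears the first row `B(e₁, e_q)` for `q < n`;
the entry `B(e₁, e_n)` has weight `n + 1`, beyond the reach of coboundaries, and is cleared by a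
multiple of `Ω_{n+1}`. Once the first row vanishes, the identity on `(e₁, e_p, e_{w-1-p})` gives
`(p - 1) B(e_{p+1}, e_{w-p-1}) = 0`, so each weight component is determined by `c = B(e₂, e_{w-2})`,
and eliminating the entries at `e₃, e₄, e₅` yields `w (w - 2) (w - 7) c = 0`. Only weights 5 and
7 survive, carried by `e²∧e³` and `e²∧e⁵ - 3e³∧e⁴`. Independence modulo coboundaries is read off
the entries at `(1, n), (1, 4), (2, 3), (2, 5), (3, 4)`.
-/

namespace Vn

section Lift

variable {M : Type*} [Zero M] {n : ℕ}

/-- Reindexing by `p = i + 1` puts `e_p` at index `p`, so that `[e_p, e_q] = (q - p) e_{p+q}`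
is additive in the index. -/
def liftVec (n : ℕ) (f : Fin n → M) (p : ℤ) : M :=
  if h : 1 ≤ p ∧ p ≤ n then f ⟨(p - 1).toNat, by omega⟩ else 0

def liftMat (n : ℕ) (a : Fin n → Fin n → M) (p q : ℤ) : M :=
  liftVec n (fun i => liftVec n (a i) q) p

lemma exists_natCast_add_one_eq {p : ℤ} (h₁ : 1 ≤ p) (h₂ : p ≤ n) :
    ∃ i : Fin n, (i : ℤ) + 1 = p :=
  ⟨⟨(p - 1).toNat, by omega⟩, by simp; omega⟩

@[simp]
lemma liftVec_natCast_add_one (f : Fin n → M) (i : Fin n) : liftVec n f ((i : ℤ) + 1) = f i := by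
  simp [liftVec]

lemma liftVec_eq_zero (f : Fin n → M) {p : ℤ} (hp : ¬(1 ≤ p ∧ p ≤ n)) : liftVec n f p = 0 :=
  dif_neg hp

@[simp]
lemma liftMat_natCast_add_one (a : Fin n → Fin n → M) (i j : Fin n) :
    liftMat n a ((i : ℤ) + 1) ((j : ℤ) + 1) = a i j := by
  simp [liftMat]

lemma liftMat_eq_zero (a : Fin n → Fin n → M) {p q : ℤ}
    (hpq : ¬(1 ≤ p ∧ p ≤ n ∧ 1 ≤ q ∧ q ≤ n)) : liftMat n a p q = 0 := by
  unfold liftMat liftVec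
  split_ifs <;> first | rfl | omega

lemma liftMat_eq_of_forall {a : Fin n → Fin n → M} {B : ℤ → ℤ → M}
    (hB : ∀ p q : ℤ, ¬(1 ≤ p ∧ p ≤ n ∧ 1 ≤ q ∧ q ≤ n) → B p q = 0)
    (h : ∀ i j : Fin n, a i j = B ((i : ℤ) + 1) ((j : ℤ) + 1)) : liftMat n a = B := by
  funext p q
  by_cases hpq : 1 ≤ p ∧ p ≤ n ∧ 1 ≤ q ∧ q ≤ n
  · obtain ⟨i, rfl⟩ := exists_natCast_add_one_eq hpq.1 hpq.2.1
    obtain ⟨j, rfl⟩ := exists_natCast_add_one_eq hpq.2.2.1 hpq.2.2.2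
    rw [liftMat_natCast_add_one, h]
  · rw [liftMat_eq_zero a hpq, hB p q hpq]

end Lift

section Cocycles

variable {R S : Type*} [CommRing R] [CommRing S] {n : ℕ}

def CocycleIdentity (n : ℕ) (B : ℤ → ℤ → R) : Prop :=
  ∀ i j l : ℤ, 1 ≤ i → i ≤ n → 1 ≤ j → j ≤ n → 1 ≤ l → l ≤ n →
    ((j - i : ℤ) : R) * B (i + j) l + ((l - j : ℤ) : R) * B (j + l) i
      + ((i - l : ℤ) : R) * B (l + i) j = 0

structure IsCocycle (n : ℕ) (B : ℤ → ℤ → R) : Prop where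
  antisymm : ∀ p q, B p q = -B q p
  eq_zero_outside : ∀ p q : ℤ, ¬(1 ≤ p ∧ p ≤ n ∧ 1 ≤ q ∧ q ≤ n) → B p q = 0
  identity : CocycleIdentity n B

lemma IsCocycle.add {B C : ℤ → ℤ → R} (hB : IsCocycle n B) (hC : IsCocycle n C) :
    IsCocycle n (B + C) where
  antisymm p q := by simp only [Pi.add_apply, hB.antisymm p q, hC.antisymm p q]; ring
  eq_zero_outside p q h := by
    simp [hB.eq_zero_outside p q h, hC.eq_zero_outside p q h]
  identity i j l hi hi' hj hj' hl hl' := by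
    simp only [Pi.add_apply]
    linear_combination
      hB.identity i j l hi hi' hj hj' hl hl' + hC.identity i j l hi hi' hj hj' hl hl'

lemma IsCocycle.smul (c : R) {B : ℤ → ℤ → R} (hB : IsCocycle n B) : IsCocycle n (c • B) where
  antisymm p q := by simp [hB.antisymm p q]
  eq_zero_outside p q h := by simp [hB.eq_zero_outside p q h]
  identity i j l hi hi' hj hj' hl hl' := by
    simp only [Pi.smul_apply, smul_eq_mul]
    linear_combination c * hB.identity i j l hi hi' hj hj' hl hl'

def cocycles (R : Type*) [CommRing R] (n : ℕ) : Submodule R (ℤ → ℤ → R) where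
  carrier := {B | IsCocycle n B}
  add_mem' := IsCocycle.add
  zero_mem' := ⟨fun _ _ => by simp, fun _ _ _ => rfl, fun _ _ _ _ _ _ _ _ _ => by simp⟩
  smul_mem' := IsCocycle.smul

lemma IsCocycle.map (φ : R →+* S) {B : ℤ → ℤ → R} (hB : IsCocycle n B) :
    IsCocycle n fun p q => φ (B p q) where
  antisymm p q := by simp [hB.antisymm p q]
  eq_zero_outside p q h := by simp [hB.eq_zero_outside p q h]
  identity i j l hi hi' hj hj' hl hl' := by
    simpa using congrArg φ (hB.identity i j l hi hi' hj hj' hl hl')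

def coboundary (n : ℕ) (f : Fin n → R) (p q : ℤ) : R :=
  if 1 ≤ p ∧ p ≤ n ∧ 1 ≤ q ∧ q ≤ n then ((q - p : ℤ) : R) * liftVec n f (p + q) else 0

lemma coboundary_mem_cocycles (f : Fin n → R) : coboundary n f ∈ cocycles R n where
  antisymm p q := by
    unfold coboundary
    split_ifs
    · rw [add_comm q p]; push_cast; ring
    · omega
    · omega
    · simp
  eq_zero_outside p q h := if_neg h
  identity i j l hi hi' hj hj' hl hl' := by
    unfold coboundary
    rw [show j + l + i = i + j + l by ring, show l + i + j = i + j + l by ring]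
    by_cases hw : i + j + l ≤ n
    · rw [if_pos (by omega), if_pos (by omega), if_pos (by omega)]
      push_cast
      ring
    · rw [liftVec_eq_zero f (by omega)]
      split_ifs <;> simp

end Cocycles

def omegaTop (n : ℕ) (p q : ℤ) : ℤ := if 1 ≤ p ∧ 1 ≤ q ∧ p + q = n + 1 then q - p else 0

def wedge23 (p q : ℤ) : ℤ := if p = 2 ∧ q = 3 then 1 else if p = 3 ∧ q = 2 then -1 else 0

def wedge25 (p q : ℤ) : ℤ :=
  if p = 2 ∧ q = 5 then 1 else if p = 5 ∧ q = 2 then -1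
  else if p = 3 ∧ q = 4 then -3 else if p = 4 ∧ q = 3 then 3 else 0

lemma omegaTop_mem_cocycles (n : ℕ) : omegaTop n ∈ cocycles ℤ n where
  antisymm p q := by unfold omegaTop; split_ifs <;> omega
  eq_zero_outside p q h := by unfold omegaTop; split_ifs <;> omega
  identity i j l hi hi' hj hj' hl hl' := by
    simp only [omegaTop, Int.cast_id]; split_ifs <;> first | omega | ring

lemma wedge23_mem_cocycles {n : ℕ} (hn : 3 ≤ n) : wedge23 ∈ cocycles ℤ n where
  antisymm p q := by unfold wedge23; split_ifs <;> omega
  eq_zero_outside p q h := by unfold wedge23; split_ifs <;> omega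
  identity i j l hi hi' hj hj' hl hl' := by
    simp only [wedge23, Int.cast_id]; split_ifs <;> omega

lemma wedge25_mem_cocycles {n : ℕ} (hn : 5 ≤ n) : wedge25 ∈ cocycles ℤ n where
  antisymm p q := by unfold wedge25; split_ifs <;> omega
  eq_zero_outside p q h := by unfold wedge25; split_ifs <;> omega
  identity i j l hi hi' hj hj' hl hl' := by
    have homog : ∀ p q, p + q ≠ 7 → wedge25 p q = 0 := by
      intro p q h; unfold wedge25; split_ifs <;> omega
    simp only [Int.cast_id]
    by_cases hw : i + j + l = 7
    · obtain rfl : l = 7 - i - j := by omega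
      have : i ≤ 5 := by omega
      have : j ≤ 5 := by omega
      interval_cases i <;> interval_cases j <;> first | omega | simp [wedge25]
    · rw [homog _ _ (by omega), homog _ _ (by omega), homog _ _ (by omega)]
      ring

def omegaInt (n : ℕ) : Fin 3 → ℤ → ℤ → ℤ := ![omegaTop n, wedge23, wedge25]

lemma omegaInt_mem_cocycles {n : ℕ} (hn : 5 ≤ n) (k : Fin 3) : omegaInt n k ∈ cocycles ℤ n := by
  fin_cases k
  exacts [omegaTop_mem_cocycles n, wedge23_mem_cocycles (by omega), wedge25_mem_cocycles hn]

section Uniqueness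

variable {K : Type*} [CommRing K] {n : ℕ}

/-- `c t` stands for the entry `B(e_t, e_{w-t})` of a cocycle `B` in weight `w`; `rel` is the
cocycle identity on `(e_i, e_j, e_{w-i-j})`. -/
structure IsWeightComponent (n : ℕ) (w : ℤ) (c : ℤ → K) : Prop where
  eq_zero_outside : ∀ p : ℤ, ¬(1 ≤ p ∧ p ≤ n ∧ 1 ≤ w - p ∧ w - p ≤ n) → c p = 0
  antisymm : ∀ p, c (w - p) = -c p
  rel : ∀ i j : ℤ, 1 ≤ i → i ≤ n → 1 ≤ j → j ≤ n → 1 ≤ w - i - j → w - i - j ≤ n →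
    ((j - i : ℤ) : K) * c (i + j)
      = ((w - i - 2 * j : ℤ) : K) * c i + ((2 * i + j - w : ℤ) : K) * c j

lemma IsCocycle.isWeightComponent {B : ℤ → ℤ → K} (hB : IsCocycle n B) (w : ℤ) :
    IsWeightComponent n w fun t => B t (w - t) where
  eq_zero_outside p h := hB.eq_zero_outside p (w - p) h
  antisymm p := by rw [sub_sub_cancel, hB.antisymm]
  rel i j hi hi' hj hj' hl hl' := by
    have h := hB.identity i j (w - i - j) hi hi' hj hj' hl hl'
    rw [show w - (i + j) = w - i - j by ring]
    rw [hB.antisymm (j + _) i, hB.antisymm (_ + i) j,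
      show j + (w - i - j) = w - i by ring, show w - i - j + i = w - j by ring] at h
    push_cast at h ⊢
    linear_combination h

lemma coboundary_eq_mul (f : Fin n → K) {p q : ℤ} (hp : 1 ≤ p) (hp' : p ≤ n) (hq : 1 ≤ q)
    (hq' : q ≤ n) : coboundary n f p q = ((q - p : ℤ) : K) * liftVec n f (p + q) :=
  if_pos ⟨hp, hp', hq, hq'⟩

variable [NoZeroDivisors K] [CharZero K]

lemma eq_zero_of_intCast_mul_eq_zero {x : ℤ} {c : K} (hx : x ≠ 0) (h : (x : K) * c = 0) : c = 0 :=
  (mul_eq_zero.mp h).resolve_left (Int.cast_ne_zero.mpr hx)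

namespace IsWeightComponent

variable {w : ℤ} {c : ℤ → K}

/-- Eliminating `c 3, c 4, c 5` from the relations for `(1,2), (1,3), (1,4), (2,3)` leaves
`w (w - 2) (w - 7) c 2 = 0`. -/
lemma apply_two_eq_zero (hc : IsWeightComponent n w c) (h₁ : c 1 = 0) (h₅ : w ≠ 5)
    (h₇ : w ≠ 7) : c 2 = 0 := by
  by_cases hw : w ≤ 2 ∨ n + 3 ≤ w
  · exact hc.eq_zero_outside 2 (by omega)
  by_cases h₃ : w = 3
  · simpa [h₃, h₁] using hc.antisymm 1
  by_cases h₄ : w = 4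
  · have h := hc.antisymm 2
    rw [h₄, show (4 : ℤ) - 2 = 2 by norm_num] at h
    exact eq_zero_of_intCast_mul_eq_zero (x := 2) (by norm_num) (by push_cast; linear_combination h)
  have e₁₂ := hc.rel 1 2 le_rfl (by omega) (by omega) (by omega) (by omega) (by omega)
  have e₁₃ := hc.rel 1 3 le_rfl (by omega) (by omega) (by omega) (by omega) (by omega)
  have e₁₄ := hc.rel 1 4 le_rfl (by omega) (by omega) (by omega) (by omega) (by omega)
  have e₂₃ := hc.rel 2 3 (by omega) (by omega) (by omega) (by omega) (by omega) (by omega)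
  rw [h₁] at e₁₂ e₁₃ e₁₄
  refine eq_zero_of_intCast_mul_eq_zero (x := w * (w - 2) * (w - 7))
    (by simp only [ne_eq, mul_eq_zero, not_or]; omega) ?_
  push_cast at e₁₂ e₁₃ e₁₄ e₂₃ ⊢
  linear_combination 2 * e₁₄ + (6 - (w : K)) * e₁₃ - 6 * e₂₃
    + ((6 - (w : K)) * (5 - w) - 6 * (7 - w)) * e₁₂

lemma eq_zero (hc : IsWeightComponent n w c) (h₁ : c 1 = 0) (h₂ : c 2 = 0) : c = 0 := by
  have h : ∀ p, 2 ≤ p → c p = 0 := by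
    intro p hp
    induction p, hp using Int.leInduction with
    | base => exact h₂
    | succ p hp ih =>
      by_cases hp' : 1 ≤ p + 1 ∧ p + 1 ≤ n ∧ 1 ≤ w - (p + 1) ∧ w - (p + 1) ≤ n
      · have h := hc.rel 1 p le_rfl (by omega) (by omega) (by omega) (by omega) (by omega)
        rw [h₁, ih, add_comm] at h
        exact eq_zero_of_intCast_mul_eq_zero (x := p - 1) (by omega) (by simpa using h)
      · exact hc.eq_zero_outside _ hp'
  funext p
  rcases (show p ≤ 0 ∨ p = 1 ∨ 2 ≤ p by omega) with hp | rfl | hp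
  · exact hc.eq_zero_outside p (by omega)
  · exact h₁
  · exact h p hp

end IsWeightComponent

theorem IsCocycle.eq_zero {B : ℤ → ℤ → K} (hB : IsCocycle n B) (h₁ : ∀ q, B 1 q = 0)
    (h₂₃ : B 2 3 = 0) (h₂₅ : B 2 5 = 0) : B = 0 := by
  funext p q
  have hc := hB.isWeightComponent (p + q)
  have h₂ : B 2 (p + q - 2) = 0 := by
    by_cases h₅ : p + q = 5
    · rwa [h₅]
    by_cases h₇ : p + q = 7
    · rwa [h₇]
    exact hc.apply_two_eq_zero (h₁ _) h₅ h₇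
  simpa using congrFun (hc.eq_zero (h₁ _) h₂) p

theorem eq_zero_of_sum_eq_coboundary (hn : 5 ≤ n) (c : Fin 3 → K) (f : Fin n → K)
    (h : ∀ p q : ℤ, 1 ≤ p → p ≤ n → 1 ≤ q → q ≤ n →
      ∑ k, c k * (omegaInt n k p q : K) = coboundary n f p q) : c = 0 := by
  have h₀ : c 0 = 0 := by
    have e := h 1 n le_rfl (by omega) (by omega) le_rfl
    rw [coboundary_eq_mul f le_rfl (by omega) (by omega) le_rfl, liftVec_eq_zero f (by omega)] at e
    refine eq_zero_of_intCast_mul_eq_zero (x := n - 1) (by omega) ?_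
    have hΩ : omegaTop n 1 n = n - 1 := if_pos ⟨le_rfl, by omega, add_comm _ _⟩
    simpa [Fin.sum_univ_three, omegaInt, hΩ, wedge23, wedge25, mul_comm] using e
  have h' : ∀ p q : ℤ, 1 ≤ p → p ≤ n → 1 ≤ q → q ≤ n →
      c 1 * wedge23 p q + c 2 * wedge25 p q = ((q - p : ℤ) : K) * liftVec n f (p + q) := by
    intro p q hp hp' hq hq'
    rw [← coboundary_eq_mul f hp hp' hq hq', ← h p q hp hp' hq hq']
    simp [Fin.sum_univ_three, omegaInt, h₀]
  have e₁₄ := h' 1 4 le_rfl (by omega) (by omega) (by omega)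
  have e₂₃ := h' 2 3 (by omega) (by omega) (by omega) (by omega)
  have e₂₅ := h' 2 5 (by omega) (by omega) (by omega) (by omega)
  have e₃₄ := h' 3 4 (by omega) (by omega) (by omega) (by omega)
  norm_num [wedge23, wedge25] at e₁₄ e₂₃ e₂₅ e₃₄
  have h₁ : c 1 = 0 := by rw [e₂₃, e₁₄]
  have h₂ : c 2 = 0 :=
    eq_zero_of_intCast_mul_eq_zero (x := 10) (by norm_num)
      (by push_cast; linear_combination e₂₅ - 3 * e₃₄)
  funext k
  fin_cases k <;> assumption

end Uniqueness

section Normalization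

variable {K : Type*} [Field K] [CharZero K] {n : ℕ}

def topCoeff (n : ℕ) (B : ℤ → ℤ → K) : K := B 1 n / (((n : ℤ) - 1 : ℤ) : K)

/-- At `m = 1` the division is the junk `x / 0 = 0`, harmless since `B(e₁, e₁) = 0`. -/
def normalizer (n : ℕ) (B : ℤ → ℤ → K) : Fin n → K := fun m => B 1 m / (((m : ℤ) - 1 : ℤ) : K)

lemma IsCocycle.sub_coboundary_normalizer_apply_one (hn : 2 ≤ n) {B : ℤ → ℤ → K}
    (hB : IsCocycle n B) (q : ℤ) :
    B 1 q - topCoeff n B * (omegaTop n 1 q : K) - coboundary n (normalizer n B) 1 q = 0 := by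
  rcases (show ¬(1 ≤ q ∧ q ≤ n) ∨ q = 1 ∨ (2 ≤ q ∧ q < n) ∨ q = n by omega)
    with hq | rfl | hq | rfl
  · rw [hB.eq_zero_outside 1 q (by omega), omegaTop, if_neg (by omega), coboundary,
      if_neg (by omega)]
    simp
  · have h := hB.antisymm 1 1
    rw [omegaTop, if_neg (by omega), coboundary_eq_mul _ le_rfl (by omega) le_rfl (by omega)]
    simp only [sub_self, Int.cast_zero, zero_mul, mul_zero, sub_zero]
    exact eq_zero_of_intCast_mul_eq_zero (x := 2) (by norm_num) (by push_cast; linear_combination h)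
  · obtain ⟨m, hm⟩ := exists_natCast_add_one_eq (n := n) (p := 1 + q) (by omega) (by omega)
    rw [omegaTop, if_neg (by omega), coboundary_eq_mul _ le_rfl (by omega) (by omega) (by omega),
      ← hm, liftVec_natCast_add_one, normalizer, show ((m : ℕ) : ℤ) = q by omega,
      mul_div_cancel₀ _ (Int.cast_ne_zero.mpr (by omega))]
    simp
  · rw [omegaTop, if_pos ⟨le_rfl, by omega, add_comm _ _⟩,
      coboundary_eq_mul _ le_rfl (by omega) (by omega) le_rfl, liftVec_eq_zero _ (by omega),
      topCoeff, div_mul_cancel₀ _ (Int.cast_ne_zero.mpr (by omega))]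
    simp

theorem exists_eq_sum_add_coboundary (hn : 5 ≤ n) {B : ℤ → ℤ → K} (hB : B ∈ cocycles K n) :
    ∃ (c : Fin 3 → K) (f : Fin n → K),
      ∀ p q, B p q = ∑ k, c k * (omegaInt n k p q : K) + coboundary n f p q := by
  have hω : ∀ k, (fun p q => (omegaInt n k p q : K)) ∈ cocycles K n :=
    fun k => (omegaInt_mem_cocycles hn k).map (Int.castRingHom K)
  set B₁ := B - topCoeff n B • (fun p q => (omegaInt n 0 p q : K)) - coboundary n (normalizer n B)
  have hB₁ : B₁ ∈ cocycles K n :=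
    sub_mem (sub_mem hB (Submodule.smul_mem _ _ (hω 0))) (coboundary_mem_cocycles _)
  set R := B₁ - B₁ 2 3 • (fun p q => (omegaInt n 1 p q : K))
    - B₁ 2 5 • (fun p q => (omegaInt n 2 p q : K))
  have hR : R ∈ cocycles K n :=
    sub_mem (sub_mem hB₁ (Submodule.smul_mem _ _ (hω 1))) (Submodule.smul_mem _ _ (hω 2))
  have hR₀ : R = 0 := by
    refine IsCocycle.eq_zero hR (fun q => ?_) ?_ ?_ <;>
      simp [R, B₁, omegaInt, wedge23, wedge25]
    exact hB.sub_coboundary_normalizer_apply_one (by omega) q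
  refine ⟨![topCoeff n B, B₁ 2 3, B₁ 2 5], normalizer n B, fun p q => ?_⟩
  have h := congrFun (congrFun hR₀ p) q
  simp [R, B₁, Fin.sum_univ_three] at h ⊢
  linear_combination h

end Normalization


section Bridge

variable {K : Type*} [Field K] {n : ℕ}

/-- Stated in the shifted indices `i + 1`, `j + 1`, so that it matches `coboundary` and
`CocycleIdentity` literally. -/
lemma sum_Vc_mul (f : Fin n → K) (i j : Fin n) :
    ∑ m, Vc K n i j m * f m
      = (((j : ℤ) + 1 - ((i : ℤ) + 1) : ℤ) : K) * liftVec n f ((i : ℤ) + 1 + ((j : ℤ) + 1)) := by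
  by_cases h : i.val + j.val + 1 < n
  · rw [Finset.sum_eq_single ⟨i + j + 1, h⟩ (fun m _ hm => ?_) (by simp)]
    · rw [show (i : ℤ) + 1 + ((j : ℤ) + 1) = (((⟨i + j + 1, h⟩ : Fin n) : ℕ) : ℤ) + 1 by
        push_cast; ring, liftVec_natCast_add_one]
      simp [Vc]
    · rw [Vc, if_neg (fun h' => hm (Fin.ext h')), zero_mul]
  · rw [liftVec_eq_zero f (by omega), mul_zero]
    exact Finset.sum_eq_zero fun m _ => by rw [Vc, if_neg (by omega), zero_mul]

lemma coboundary_natCast_add_one (f : Fin n → K) (i j : Fin n) :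
    coboundary n f ((i : ℤ) + 1) ((j : ℤ) + 1) = ∑ m, Vc K n i j m * f m := by
  rw [sum_Vc_mul, coboundary_eq_mul f (by omega) (by omega) (by omega) (by omega)]

lemma vClosed_iff (a : Fin n → Fin n → K) : VClosed K n a ↔ CocycleIdentity n (liftMat n a) := by
  have key : ∀ i j l : Fin n, ∑ m, Vc K n i j m * a m l = (((j : ℤ) + 1 - ((i : ℤ) + 1) : ℤ) : K)
      * liftMat n a ((i : ℤ) + 1 + ((j : ℤ) + 1)) ((l : ℤ) + 1) := by
    intro i j l
    simp only [sum_Vc_mul, liftMat, liftVec_natCast_add_one]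
  simp only [VClosed, key]
  constructor
  · intro h p q r hp hp' hq hq' hr hr'
    obtain ⟨i, rfl⟩ := exists_natCast_add_one_eq hp hp'
    obtain ⟨j, rfl⟩ := exists_natCast_add_one_eq hq hq'
    obtain ⟨l, rfl⟩ := exists_natCast_add_one_eq hr hr'
    exact h i j l
  · intro h i j l
    exact h _ _ _ (by omega) (by omega) (by omega) (by omega) (by omega) (by omega)

lemma liftMat_mem_cocycles {a : Fin n → Fin n → K} (ha : ∀ i j, a i j = -a j i)
    (hc : VClosed K n a) : liftMat n a ∈ cocycles K n where
  antisymm p q := by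
    by_cases h : 1 ≤ p ∧ p ≤ n ∧ 1 ≤ q ∧ q ≤ n
    · obtain ⟨i, rfl⟩ := exists_natCast_add_one_eq h.1 h.2.1
      obtain ⟨j, rfl⟩ := exists_natCast_add_one_eq h.2.2.1 h.2.2.2
      simp [ha i j]
    · rw [liftMat_eq_zero a h, liftMat_eq_zero a (by omega), neg_zero]
  eq_zero_outside _ _ := liftMat_eq_zero a
  identity := (vClosed_iff a).1 hc

lemma VOmega_eq_omegaInt (k : Fin 3) (i j : Fin n) :
    VOmega K n k i j = (omegaInt n k ((i : ℤ) + 1) ((j : ℤ) + 1) : K) := by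
  fin_cases k <;> simp [VOmega, omegaInt, omegaTop, wedge23, wedge25] <;> split_ifs <;>
    first | omega | simp_all

end Bridge

end Vn

open Vn in
/-- For `n ≥ 5`, the classes of `Ω_{n+1}`, `e²∧e³` and
`e²∧e⁵ - 3e³∧e⁴` form a basis of `H²(𝒱ₙ; K)`; in particular `dim H²(𝒱ₙ) = 3`:
(i) each is a cocycle; (ii) every antisymmetric closed 2-form is a linear
combination of them plus a coboundary; (iii) they are independent modulo
coboundaries. -/
theorem stmt11 (K : Type*) [Field K] [CharZero K] (n : ℕ) (hn : 5 ≤ n) :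
    (∀ k, VClosed K n (VOmega K n k)) ∧
    (∀ a : Fin n → Fin n → K, (∀ i j, a i j = - a j i) → VClosed K n a →
      ∃ (coef : Fin 3 → K) (f : Fin n → K),
        ∀ i j, a i j = (∑ k, coef k * VOmega K n k i j) + ∑ m, Vc K n i j m * f m) ∧
    (∀ (coef : Fin 3 → K) (f : Fin n → K),
      (∀ i j, (∑ k, coef k * VOmega K n k i j) = ∑ m, Vc K n i j m * f m) →
      coef = 0) := by
  refine ⟨fun k => ?_, fun a ha hc => ?_, fun c f h => ?_⟩
  · have hω := (omegaInt_mem_cocycles hn k).map (Int.castRingHom K)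
    rw [vClosed_iff, liftMat_eq_of_forall hω.eq_zero_outside (VOmega_eq_omegaInt k)]
    exact hω.identity
  · obtain ⟨c, f, h⟩ := exists_eq_sum_add_coboundary hn (liftMat_mem_cocycles ha hc)
    refine ⟨c, f, fun i j => ?_⟩
    simpa [VOmega_eq_omegaInt, coboundary_natCast_add_one] using h (i + 1) (j + 1)
  · refine eq_zero_of_sum_eq_coboundary hn c f fun p q hp hp' hq hq' => ?_
    obtain ⟨i, rfl⟩ := exists_natCast_add_one_eq hp hp'
    obtain ⟨j, rfl⟩ := exists_natCast_add_one_eq hq hq'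
    simpa [VOmega_eq_omegaInt, coboundary_natCast_add_one] using h i j
end

section
/- For $k\ge 2$, the 2-form $\omega_{2k+1}=(2k-1)e^1\wedge e^{2k}+(2k-3)e^2\wedge e^{2k-1}+\dots+e^k\wedge e^{k+1}$ is a symplectic form on the Lie algebra $\mathcal{V}_{2k}$: it is closed ($d\omega_{2k+1}=0$ in the Chevalley–Eilenberg complex) and non-degenerate. -/
/-- The matrix of the 2-form
`ω_{2k+1} = (2k-1) e¹∧e^{2k} + (2k-3) e²∧e^{2k-1} + ⋯ + e^k∧e^{k+1}`:
in zero-based indices its `(p,q)` entry is `q - p` when `p + q = 2k - 1`. -/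
def VSymp (K : Type*) [Field K] (k : ℕ) (p q : Fin (2 * k)) : K :=
  if p.val + q.val = 2 * k - 1 then (((q.val : ℤ) - (p.val : ℤ) : ℤ) : K) else 0

lemma sum_Vc (K : Type*) [Field K] (n : ℕ) (i j : Fin n) (f : Fin n → K) :
    ∑ m, Vc K n i j m * f m =
      if h : i.val + j.val + 1 < n then
        (((j.val : ℤ) - (i.val : ℤ) : ℤ) : K) * f ⟨i.val + j.val + 1, h⟩ else 0 := by
  unfold Vc
  by_cases h : i.val + j.val + 1 < n
  · rw [dif_pos h, Finset.sum_eq_single (⟨i.val + j.val + 1, h⟩ : Fin n)]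
    · simp
    · intro m _ hm
      rw [if_neg, zero_mul]
      intro hc; exact hm (Fin.ext hc)
    · simp
  · rw [dif_neg h]
    apply Finset.sum_eq_zero
    intro m _
    rw [if_neg, zero_mul]
    intro hc; exact h (hc ▸ m.isLt)

lemma sum_VSymp (K : Type*) [Field K] (k : ℕ) (hk : 1 ≤ k) (j : Fin (2 * k)) (v : Fin (2 * k) → K) :
    ∑ i, v i * VSymp K k i j =
      v ⟨2 * k - 1 - j.val, by omega⟩ *
        (((j.val : ℤ) - ((2 * k - 1 - j.val : ℕ) : ℤ) : ℤ) : K) := by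
  unfold VSymp
  rw [Finset.sum_eq_single (⟨2 * k - 1 - j.val, by omega⟩ : Fin (2 * k))]
  · rw [if_pos (by simp only [Fin.val_mk]; omega)]
  · intro m _ hm
    rw [if_neg, mul_zero]
    intro hc
    apply hm
    apply Fin.ext
    simp only [Fin.val_mk]
    omega
  · simp

/-- For `k ≥ 2`, the 2-form `ω_{2k+1}` is a symplectic form on
`𝒱_{2k}`: it is closed in the Chevalley–Eilenberg complex and non-degenerate. -/
theorem stmt12 (K : Type*) [Field K] [CharZero K] (k : ℕ) (hk : 2 ≤ k) :
    VClosed K (2 * k) (VSymp K k) ∧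
    ∀ v : Fin (2 * k) → K, (∀ j, ∑ i, v i * VSymp K k i j = 0) → v = 0 := by
  constructor
  · intro i j l
    rw [sum_Vc, sum_Vc, sum_Vc]
    unfold VSymp
    simp only [Fin.val_mk]
    split_ifs <;> first
        | (push_cast; ring1)
        | (exfalso; omega)
  · intro v hv
    funext p
    have h := hv ⟨2 * k - 1 - p.val, by omega⟩
    rw [sum_VSymp K k (by omega)] at h
    simp only [Fin.val_mk] at h
    have hp : (⟨2 * k - 1 - (2 * k - 1 - p.val), by omega⟩ : Fin (2 * k)) = p :=
      Fin.ext (by simp; omega)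
    rw [hp] at h
    have hc : ((((2 * k - 1 - p.val : ℕ) : ℤ) - ((2 * k - 1 - (2 * k - 1 - p.val) : ℕ) : ℤ) : ℤ) : K) ≠ 0 := by
      rw [Int.cast_ne_zero]
      omega
    have := mul_eq_zero.mp h
    simp only [Pi.zero_apply]
    tauto
end

section
/- For $k\ge 2$ and any nonzero scalar $\beta$, the 2-form $\omega = e^1\wedge e^{2k} + \beta\sum_{i=2}^{k}(-1)^i e^i\wedge e^{2k-i+1}$ is a symplectic form (closed and non-degenerate) on the Lie algebra $\mathfrak{m}_0(2k)$. -/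
/-- The matrix of the 2-form `ω = e¹∧e^{2k} + β ∑_{i=2}^{k} (-1)ⁱ eⁱ∧e^{2k-i+1}`
(zero-based indices: entry at `(p,q)` with `p + q = 2k - 1`). -/
def m0Symp (K : Type*) [Field K] (k : ℕ) (β : K) (p q : Fin (2 * k)) : K :=
  if p.val + q.val = 2 * k - 1 then
    (if p.val = 0 then 1 else if q.val = 0 then -1 else β * (-1 : K) ^ (p.val + 1))
  else 0

/-- values of the symplectic matrix as a function of natural indices -/
def Bv (K : Type*) [Field K] (k : ℕ) (β : K) (p q : ℕ) : K :=
  if p < 2 * k ∧ q < 2 * k ∧ p + q = 2 * k - 1 then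
    (if p = 0 then 1 else if q = 0 then -1 else β * (-1 : K) ^ (p + 1))
  else 0

lemma sum_ind {K : Type*} [Field K] {n : ℕ} (P : Prop) [Decidable P] (c : ℕ) (f : Fin n → K) :
    ∑ m : Fin n, (if P ∧ m.val = c then (1:K) else 0) * f m
      = if P then (if h : c < n then f ⟨c, h⟩ else 0) else 0 := by
  by_cases hP : P
  · simp only [hP, true_and, if_true]
    by_cases h : c < n
    · rw [dif_pos h, Fintype.sum_eq_single ⟨c, h⟩]
      · simp
      · intro m hm
        rw [if_neg, zero_mul]
        intro hc
        exact hm (Fin.ext hc)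
    · rw [dif_neg h]
      apply Finset.sum_eq_zero
      intro m _
      rw [if_neg, zero_mul]
      intro hc
      exact h (hc ▸ m.isLt)
  · simp [hP]

lemma sum_m0c {K : Type*} [Field K] {n : ℕ} (i j : Fin n) (f : Fin n → K) :
    ∑ m, m0c K n i j m * f m =
      (if i.val = 0 ∧ 1 ≤ j.val then (if h : j.val + 1 < n then f ⟨j.val+1, h⟩ else 0) else 0)
      - (if j.val = 0 ∧ 1 ≤ i.val then (if h : i.val + 1 < n then f ⟨i.val+1, h⟩ else 0) else 0) := by
  simp only [m0c, sub_mul, Finset.sum_sub_distrib]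
  simp only [← and_assoc]
  rw [sum_ind, sum_ind]

lemma dite_eq_Bv {K : Type*} [Field K] (k : ℕ) (β : K) (c : ℕ) (l : Fin (2*k)) :
    (if h : c < 2*k then m0Symp K k β ⟨c,h⟩ l else 0) = Bv K k β c l.val := by
  by_cases h : c < 2*k
  · rw [dif_pos h]
    have hiff : (c < 2*k ∧ l.val < 2*k ∧ c + l.val = 2*k-1) ↔ c + l.val = 2*k-1 :=
      ⟨fun h => h.2.2, fun hc => ⟨h, l.isLt, hc⟩⟩
    simp only [m0Symp, Bv, hiff]
  · rw [dif_neg h]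
    unfold Bv
    rw [if_neg (by tauto)]

lemma negOnePow_congr {K : Type*} [Field K] (a b : ℕ) (h : a % 2 = b % 2) :
    (-1 : K)^a = (-1 : K)^b := by
  conv_lhs => rw [← Nat.div_add_mod a 2]
  conv_rhs => rw [← Nat.div_add_mod b 2]
  rw [pow_add, pow_add, pow_mul, pow_mul, neg_one_sq, one_pow, one_pow, h]

lemma Bv_symm {K : Type*} [Field K] (k : ℕ) (β : K) (p q : ℕ) (hp : 1 ≤ p) (hq : 1 ≤ q) :
    Bv K k β (p+1) q = Bv K k β (q+1) p := by
  unfold Bv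
  by_cases h : p + 1 < 2*k ∧ q < 2*k ∧ p + 1 + q = 2*k - 1
  · obtain ⟨h1, h2, h3⟩ := h
    rw [if_pos ⟨h1, h2, h3⟩, if_pos (show q+1 < 2*k ∧ p < 2*k ∧ q+1+p = 2*k-1 by omega)]
    rw [if_neg (show ¬(p+1 = 0) by omega), if_neg (show ¬(q = 0) by omega),
      if_neg (show ¬(q+1 = 0) by omega), if_neg (show ¬(p = 0) by omega)]
    rw [negOnePow_congr (p+1+1) (q+1+1) (by omega)]
  · rw [if_neg h, if_neg (show ¬(q+1 < 2*k ∧ p < 2*k ∧ q+1+p = 2*k-1) by omega)]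

lemma closed_key {K : Type*} [Field K] (k : ℕ) (β : K) (a b c : ℕ) :
    ((if a = 0 ∧ 1 ≤ b then Bv K k β (b+1) c else 0) - (if b = 0 ∧ 1 ≤ a then Bv K k β (a+1) c else 0))
    + ((if b = 0 ∧ 1 ≤ c then Bv K k β (c+1) a else 0) - (if c = 0 ∧ 1 ≤ b then Bv K k β (b+1) a else 0))
    + ((if c = 0 ∧ 1 ≤ a then Bv K k β (a+1) b else 0) - (if a = 0 ∧ 1 ≤ c then Bv K k β (c+1) b else 0)) = 0 := by
  rcases Nat.eq_zero_or_pos a with ha|ha <;> rcases Nat.eq_zero_or_pos b with hb|hb <;>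
    rcases Nat.eq_zero_or_pos c with hc|hc <;>
    simp_all [Nat.pos_iff_ne_zero, Nat.one_le_iff_ne_zero]
  · rw [Bv_symm k β b c (by omega) (by omega)]; ring
  · rw [Bv_symm k β a c (by omega) (by omega)]; ring
  · rw [Bv_symm k β a b (by omega) (by omega)]; ring

/-- For `k ≥ 2` and any nonzero scalar `β`, the 2-form
`ω = e¹∧e^{2k} + β ∑_{i=2}^{k} (-1)ⁱ eⁱ∧e^{2k-i+1}` is a symplectic form on
`𝔪₀(2k)`: closed and non-degenerate. -/
theorem stmt13 (K : Type*) [Field K] [CharZero K] (k : ℕ) (hk : 2 ≤ k)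
    (β : K) (hβ : β ≠ 0) :
    m0Closed K (2 * k) (m0Symp K k β) ∧
    ∀ v : Fin (2 * k) → K, (∀ j, ∑ i, v i * m0Symp K k β i j = 0) → v = 0 := by
  constructor
  · intro i j l
    rw [sum_m0c, sum_m0c, sum_m0c]
    simp only [dite_eq_Bv]
    exact closed_key k β i.val j.val l.val
  · intro v hv
    funext p
    have hp := p.isLt
    have hj : 2*k - 1 - p.val < 2*k := by omega
    have h := hv ⟨2*k - 1 - p.val, hj⟩
    rw [Fintype.sum_eq_single p (fun q hq => by
      have : q.val ≠ p.val := fun h => hq (Fin.ext h)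
      have hql := q.isLt
      rw [show m0Symp K k β q ⟨2*k-1-p.val, hj⟩ = 0 from if_neg (by simp only; omega), mul_zero])] at h
    have hne : m0Symp K k β p ⟨2*k-1-p.val, hj⟩ ≠ 0 := by
      unfold m0Symp
      simp only
      rw [if_pos (by omega)]
      by_cases h0 : p.val = 0
      · rw [if_pos h0]; exact one_ne_zero
      · rw [if_neg h0]
        by_cases h1 : 2*k-1-p.val = 0
        · rw [if_pos h1]; exact neg_ne_zero.mpr one_ne_zero
        · rw [if_neg h1]
          exact mul_ne_zero hβ (pow_ne_zero _ (neg_ne_zero.mpr one_ne_zero))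
    have := (mul_eq_zero.mp h).resolve_right hne
    simpa using this
end

section
/- The Lie algebra $\mathfrak{m}_1(2k)$ with basis $e_1,\dots,e_{2k}$ and brackets $[e_1,e_i]=e_{i+1}$ for $2\le i\le 2k-1$ and $[e_j,e_{2k+1-j}]=(-1)^{j+1}e_{2k}$ for $2\le j\le k$ admits no symplectic form: every closed 2-form on $\mathfrak{m}_1(2k)$ is degenerate (for $k \ge 3$). -/
/-- Structure constants of `𝔪₁(2k)` (zero-based basis `e₁, …, e_{2k}`):
`[e₁, eᵢ] = e_{i+1}` for `2 ≤ i ≤ 2k-1` and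
`[eⱼ, e_{2k+1-j}] = (-1)^{j+1} e_{2k}` for `2 ≤ j ≤ k`, all other brackets zero. -/
def m1c (K : Type*) [Field K] (k : ℕ) (i j l : Fin (2 * k)) : K :=
  ((if i.val = 0 ∧ 1 ≤ j.val ∧ l.val = j.val + 1 then 1 else 0)
    + (if 1 ≤ i.val ∧ i.val ≤ k - 1 ∧ i.val + j.val = 2 * k - 1 ∧ l.val = 2 * k - 1
        then (-1 : K) ^ i.val else 0))
  - ((if j.val = 0 ∧ 1 ≤ i.val ∧ l.val = i.val + 1 then 1 else 0)
    + (if 1 ≤ j.val ∧ j.val ≤ k - 1 ∧ i.val + j.val = 2 * k - 1 ∧ l.val = 2 * k - 1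
        then (-1 : K) ^ j.val else 0))

/-- Chevalley–Eilenberg closedness for a 2-form on `𝔪₁(2k)` given by its matrix. -/
def m1Closed (K : Type*) [Field K] (k : ℕ) (a : Fin (2 * k) → Fin (2 * k) → K) : Prop :=
  ∀ i j l : Fin (2 * k),
    (∑ m, m1c K k i j m * a m l) + (∑ m, m1c K k j l m * a m i)
      + (∑ m, m1c K k l i m * a m j) = 0

section aux

variable {K : Type*} [Field K] {k : ℕ}

/-- Summation against a structure-constant column supported at a single index. -/
lemma m1c_sum (i j : Fin (2*k)) (t : ℕ) (ht : t < 2*k) (c : K)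
    (h : ∀ m : Fin (2*k), m1c K k i j m = if m.val = t then c else 0)
    (g : Fin (2*k) → K) :
    ∑ m, m1c K k i j m * g m = c * g ⟨t, ht⟩ := by
  simp_rw [h]
  rw [Finset.sum_eq_single (⟨t, ht⟩ : Fin (2*k))]
  · simp
  · intro m _ hm
    have : m.val ≠ t := fun hh => hm (Fin.ext hh)
    simp [this]
  · simp

lemma m1c_sum_zero (i j : Fin (2*k))
    (h : ∀ m : Fin (2*k), m1c K k i j m = 0)
    (g : Fin (2*k) → K) :
    ∑ m, m1c K k i j m * g m = 0 := by
  simp [h]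

/-- `c(e₀, e_j, ·)` is the indicator of `j+1`. -/
lemma m1c_evalA (hk : 1 ≤ k) (i j : Fin (2*k)) (hi : i.val = 0) (hj : 1 ≤ j.val)
    (m : Fin (2*k)) :
    m1c K k i j m = if m.val = j.val + 1 then 1 else 0 := by
  unfold m1c
  split_ifs <;> first | (exfalso; omega) | ring

/-- `c(e_i, e_{2k-1}, ·) = 0` for `1 ≤ i ≤ 2k-2`. -/
lemma m1c_evalB (hk : 2 ≤ k) (i j : Fin (2*k)) (hi1 : 1 ≤ i.val) (hi2 : i.val ≤ 2*k-2)
    (hj : j.val = 2*k-1) (m : Fin (2*k)) :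
    m1c K k i j m = 0 := by
  unfold m1c
  split_ifs <;> first | (exfalso; omega) | ring

/-- `c(e_{2k-1}, e₀, ·) = 0`. -/
lemma m1c_evalC (hk : 1 ≤ k) (i j : Fin (2*k)) (hi : i.val = 2*k-1) (hj : j.val = 0)
    (m : Fin (2*k)) :
    m1c K k i j m = 0 := by
  unfold m1c
  split_ifs <;> first | (exfalso; omega) | ring

/-- `c(e_i, e_j, ·)` for `i + j = 2k-1`, `1 ≤ i ≤ k-1`. -/
lemma m1c_evalD (i j : Fin (2*k)) (hi1 : 1 ≤ i.val) (hi2 : i.val ≤ k-1)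
    (hij : i.val + j.val = 2*k-1) (m : Fin (2*k)) :
    m1c K k i j m = if m.val = 2*k-1 then (-1:K)^i.val else 0 := by
  have hk : 2 ≤ k := by omega
  unfold m1c
  split_ifs <;> first | (exfalso; omega) | ring

/-- `c(e_i, e₀, ·)` is minus the indicator of `i+1`, for `1 ≤ i ≤ 2k-2`. -/
lemma m1c_evalE (i j : Fin (2*k)) (hj : j.val = 0) (hi1 : 1 ≤ i.val) (hi2 : i.val ≤ 2*k-2)
    (m : Fin (2*k)) :
    m1c K k i j m = if m.val = i.val + 1 then (-1:K) else 0 := by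
  unfold m1c
  split_ifs <;> first | (exfalso; omega) | ring

/-- `c(e_i, e_j, ·) = 0` when `i, j ≥ 1` and `i + j ≠ 2k-1`. -/
lemma m1c_evalF (i j : Fin (2*k)) (hi : 1 ≤ i.val) (hj : 1 ≤ j.val)
    (hij : i.val + j.val ≠ 2*k-1) (m : Fin (2*k)) :
    m1c K k i j m = 0 := by
  unfold m1c
  split_ifs <;> first | (exfalso; omega) | ring

end aux

/-- For `k ≥ 3`, the Lie algebra `𝔪₁(2k)` admits no symplectic
form: every closed antisymmetric 2-form on `𝔪₁(2k)` is degenerate. -/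
theorem stmt14 (K : Type*) [Field K] [CharZero K] (k : ℕ) (hk : 3 ≤ k) :
    ∀ a : Fin (2 * k) → Fin (2 * k) → K,
      (∀ i j, a i j = - a j i) → m1Closed K k a →
      ∃ v : Fin (2 * k) → K, v ≠ 0 ∧ ∀ j, ∑ i, v i * a i j = 0 := by
  intro a hskew hclosed
  have hk1 : 1 ≤ k := by omega
  have hkpos : 0 < 2*k := by omega
  -- proof-insensitive double indexing
  set b : ℕ → ℕ → K :=
    fun p q => a ⟨p % (2*k), Nat.mod_lt p hkpos⟩ ⟨q % (2*k), Nat.mod_lt q hkpos⟩ with hbdef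
  have hb : ∀ (p q : ℕ) (hp : p < 2*k) (hq : q < 2*k), b p q = a ⟨p, hp⟩ ⟨q, hq⟩ := by
    intro p q hp hq
    simp only [hbdef]
    have e1 : (⟨p % (2*k), Nat.mod_lt p hkpos⟩ : Fin (2*k)) = ⟨p, hp⟩ :=
      Fin.ext (Nat.mod_eq_of_lt hp)
    have e2 : (⟨q % (2*k), Nat.mod_lt q hkpos⟩ : Fin (2*k)) = ⟨q, hq⟩ :=
      Fin.ext (Nat.mod_eq_of_lt hq)
    rw [e1, e2]
  have hbskew : ∀ p q : ℕ, b p q = - b q p := by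
    intro p q
    simp only [hbdef]
    exact hskew _ _
  -- Step I : b t (2k-1) = 0 for 2 ≤ t ≤ 2k-1
  have stepI : ∀ (t : ℕ), 2 ≤ t → t < 2*k → b t (2*k-1) = 0 := by
    intro t h2 ht
    have hE := hclosed ⟨0, by omega⟩ ⟨t-1, by omega⟩ ⟨2*k-1, by omega⟩
    rw [m1c_sum (K := K) ⟨0, by omega⟩ ⟨t-1, by omega⟩ t ht 1
        (fun m => by
          rw [m1c_evalA hk1 _ _ rfl (by simp only [Fin.val_mk]; omega) m]
          have h : t - 1 + 1 = t := by omega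
          simp only [h]),
      m1c_sum_zero _ _ (fun m => m1c_evalB (by omega) _ _ (by simp only [Fin.val_mk]; omega) (by simp only [Fin.val_mk]; omega) rfl m),
      m1c_sum_zero _ _ (fun m => m1c_evalC hk1 _ _ rfl rfl m)] at hE
    rw [hb t (2*k-1) ht (by omega)]
    linear_combination hE
  -- Step II : b (2k-1) 1 = 0
  have stepII : b (2*k-1) 1 = 0 := by
    have hE := hclosed ⟨2, by omega⟩ ⟨2*k-3, by omega⟩ ⟨1, by omega⟩
    rw [m1c_sum (K := K) ⟨2, by omega⟩ ⟨2*k-3, by omega⟩ (2*k-1) (by omega) ((-1:K)^(2:ℕ))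
        (fun m => m1c_evalD _ _ (by simp only [Fin.val_mk]; omega) (by simp only [Fin.val_mk]; omega) (by simp only [Fin.val_mk]; omega) m),
      m1c_sum_zero _ _ (fun m => m1c_evalF _ _ (by simp only [Fin.val_mk]; omega) (by simp only [Fin.val_mk]; omega) (by simp only [Fin.val_mk]; omega) m),
      m1c_sum_zero _ _ (fun m => m1c_evalF _ _ (by simp only [Fin.val_mk]; omega) (by simp only [Fin.val_mk]; omega) (by simp only [Fin.val_mk]; omega) m)] at hE
    rw [hb (2*k-1) 1 (by omega) (by omega)]
    linear_combination hE
  -- Step III : recursion b p (2k-p) = (-1)^p A + b (2k-(p-1)) (p-1) for 2 ≤ p ≤ k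
  have stepIII : ∀ (p : ℕ), 2 ≤ p → p ≤ k →
      b p (2*k-p) = (-1:K)^p * b (2*k-1) 0 + b (2*k-(p-1)) (p-1) := by
    intro p h2 hpk
    have hE := hclosed ⟨0, by omega⟩ ⟨p-1, by omega⟩ ⟨2*k-p, by omega⟩
    rw [m1c_sum (K := K) ⟨0, by omega⟩ ⟨p-1, by omega⟩ p (by omega) 1
        (fun m => by
          rw [m1c_evalA hk1 _ _ rfl (by simp only [Fin.val_mk]; omega) m]
          have h : p - 1 + 1 = p := by omega
          simp only [h]),
      m1c_sum (K := K) ⟨p-1, by omega⟩ ⟨2*k-p, by omega⟩ (2*k-1) (by omega) ((-1:K)^(p-1))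
        (fun m => m1c_evalD _ _ (by simp only [Fin.val_mk]; omega) (by simp only [Fin.val_mk]; omega) (by simp only [Fin.val_mk]; omega) m),
      m1c_sum (K := K) ⟨2*k-p, by omega⟩ ⟨0, by omega⟩ (2*k-p+1) (by omega) (-1:K)
        (fun m => m1c_evalE _ _ rfl (by simp only [Fin.val_mk]; omega) (by simp only [Fin.val_mk]; omega) m)] at hE
    rw [← hb p (2*k-p) (by omega) (by omega), ← hb (2*k-1) 0 (by omega) (by omega),
      ← hb (2*k-p+1) (p-1) (by omega) (by omega)] at hE
    have e1 : 2*k-p+1 = 2*k-(p-1) := by omega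
    rw [e1] at hE
    obtain ⟨q, rfl⟩ : ∃ q, p = q + 1 := ⟨p-1, by omega⟩
    have e2 : q + 1 - 1 = q := rfl
    rw [e2] at hE ⊢
    rw [pow_succ]
    linear_combination hE
  -- the chain : b p (2k-p) = (-1)^p (p-1) A for 1 ≤ p ≤ k
  have chain : ∀ (p : ℕ), 1 ≤ p → p ≤ k →
      b p (2*k-p) = (-1:K)^p * ((p:K) - 1) * b (2*k-1) 0 := by
    intro p
    induction p with
    | zero => intro h1; omega
    | succ q ih =>
      intro h1 hpk
      rcases Nat.lt_or_ge q 1 with hq | hq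
      · -- q = 0, p = 1 : b 1 (2k-1) = -b (2k-1) 1 = 0
        have hq0 : q = 0 := by omega
        subst hq0
        simp only [Nat.zero_add]
        rw [hbskew 1 (2*k-1), stepII]
        norm_num
      · -- inductive step
        have hrec := stepIII (q+1) (by omega) hpk
        have hprev := ih hq (by omega)
        have e2 : q + 1 - 1 = q := rfl
        rw [e2] at hrec
        rw [hrec, hbskew (2*k-q) q, hprev]
        push_cast
        ring
  -- Step IV : A = 0
  have hA0 : b (2*k-1) 0 = 0 := by
    have hchain := chain k hk1 le_rfl
    have hdiag : b k (2*k-k) = 0 := by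
      have e : 2*k-k = k := by omega
      rw [e]
      have := hbskew k k
      linear_combination this / 2
    rw [hdiag] at hchain
    have hne1 : ((-1:K)^k) ≠ 0 := by
      intro h
      exact absurd (pow_eq_zero_iff (by omega) |>.mp h) (by norm_num)
    have hne2 : ((k:K) - 1) ≠ 0 := by
      intro h
      have h1 : (k:K) = 1 := by linear_combination h
      have : (k:ℕ) = 1 := by exact_mod_cast h1
      omega
    have h0 := hchain.symm
    rcases mul_eq_zero.mp h0 with h | h
    · rcases mul_eq_zero.mp h with h' | h'
      · exact absurd h' hne1
      · exact absurd h' hne2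
    · exact h
  -- the whole last row vanishes
  have hkk : 2*k-1 < 2*k := by omega
  have lastrow : ∀ j : Fin (2*k), a ⟨2*k-1, hkk⟩ j = 0 := by
    intro j
    have hj : a ⟨2*k-1, hkk⟩ j = b (2*k-1) j.val := by
      rw [hb (2*k-1) j.val hkk j.isLt]
    rw [hj]
    rcases Nat.lt_or_ge j.val 2 with h2 | h2
    · rcases Nat.lt_or_ge j.val 1 with h0 | h1
      · have : j.val = 0 := by omega
        rw [this]; exact hA0
      · have : j.val = 1 := by omega
        rw [this]; exact stepII
    · rw [hbskew (2*k-1) j.val, stepI j.val h2 j.isLt, neg_zero]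
  -- conclude with v = e_{2k-1}
  refine ⟨fun i => if i.val = 2*k-1 then 1 else 0, ?_, ?_⟩
  · intro h
    have := congrFun h ⟨2*k-1, hkk⟩
    simp at this
  · intro j
    have hsum : (∑ i, (if (i : Fin (2*k)).val = 2*k-1 then (1:K) else 0) * a i j)
        = a ⟨2*k-1, hkk⟩ j := by
      rw [Finset.sum_eq_single (⟨2*k-1, hkk⟩ : Fin (2*k))]
      · simp
      · intro m _ hm
        have : m.val ≠ 2*k-1 := fun hh => hm (Fin.ext hh)
        simp [this]
      · simp
    rw [hsum, lastrow]
end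

section
/- The Lie algebra $\mathfrak{g}$ with basis $e_1,\dots,e_{10}$ and nonzero brackets $[e_1,e_i]=e_{i+1}$ ($2\le i\le 9$), $[e_2,e_6]=e_{10}$, $[e_2,e_5]=e_9$, $[e_2,e_4]=e_8$, $[e_2,e_3]=e_7$ admits no symplectic structure: every closed 2-form on $\mathfrak{g}$ is degenerate. -/
/-!
Closedness forces `ω(e₈, eⱼ) = 0` and `ω(e₉, eⱼ) = 0` for all `j ≥ 2`: each of these entries
is linked to zero by a short chain of the cocycle identities
`ω([x,y],z) + ω([y,z],x) + ω([z,x],y) = 0` with `x ∈ {e₁, e₂}`. So `ω(e₈, ·)` and `ω(e₉, ·)`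
are both multiples of `e₁*`, and a nontrivial combination of `e₈` and `e₉` lies in the kernel
of `ω`. (With the zero-based indices of `gc18`, `e₈, e₉` are `7, 8` and `e₁` is `0`.)
-/

/-- Structure constants (zero-based basis `e₁, …, e₁₀`) of the 10-dimensional
Lie algebra with nonzero brackets `[e₁, eᵢ] = e_{i+1}` (`2 ≤ i ≤ 9`),
`[e₂,e₃] = e₇`, `[e₂,e₄] = e₈`, `[e₂,e₅] = e₉`, `[e₂,e₆] = e₁₀`. -/
def gc18 (K : Type*) [Field K] (i j l : Fin 10) : K :=
  ((if i.val = 0 ∧ 1 ≤ j.val ∧ l.val = j.val + 1 then 1 else 0)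
    + (if i.val = 1 ∧ 2 ≤ j.val ∧ j.val ≤ 5 ∧ l.val = j.val + 4 then 1 else 0))
  - ((if j.val = 0 ∧ 1 ≤ i.val ∧ l.val = i.val + 1 then 1 else 0)
    + (if j.val = 1 ∧ 2 ≤ i.val ∧ i.val ≤ 5 ∧ l.val = i.val + 4 then 1 else 0))

/-- Chevalley–Eilenberg closedness for a 2-form given by its matrix. -/
def gc18Closed (K : Type*) [Field K] (a : Fin 10 → Fin 10 → K) : Prop :=
  ∀ i j l : Fin 10,
    (∑ m, gc18 K i j m * a m l) + (∑ m, gc18 K j l m * a m i)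
      + (∑ m, gc18 K l i m * a m j) = 0

theorem exists_ne_zero_sum_mul_eq_zero_of_two_rows_supported_at {ι K : Type*} [Fintype ι]
    [DecidableEq ι] [CommRing K] [Nontrivial K] (a : ι → ι → K) {p q k : ι} (hpq : p ≠ q)
    (hp : ∀ j ≠ k, a p j = 0) (hq : ∀ j ≠ k, a q j = 0) :
    ∃ v : ι → K, v ≠ 0 ∧ ∀ j, ∑ i, v i * a i j = 0 := by
  have sum_single (r : ι) (c : K) (j : ι) : ∑ i, (Pi.single r c : ι → K) i * a i j = c * a r j :=
    single_dotProduct (v := fun i => a i j) c r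
  by_cases hpk : a p k = 0
  · refine ⟨Pi.single p 1, by simp, fun j => ?_⟩
    rw [sum_single, one_mul]
    rcases eq_or_ne j k with rfl | hj
    exacts [hpk, hp j hj]
  · refine ⟨Pi.single p (a q k) - Pi.single q (a p k), fun h => hpk ?_, fun j => ?_⟩
    · simpa [hpq] using congrFun h q
    · simp only [Pi.sub_apply, sub_mul, Finset.sum_sub_distrib, sum_single]
      rcases eq_or_ne j k with rfl | hj
      · ring
      · simp [hp j hj, hq j hj]

namespace gc18Closed

variable {K : Type*} [Field K] [CharZero K] {a : Fin 10 → Fin 10 → K}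

theorem apply_seven_eq_zero (hs : ∀ i j, a i j = -a j i) (hcl : gc18Closed K a)
    {j : Fin 10} (hj : j ≠ 0) : a 7 j = 0 := by
  have hd (i : Fin 10) : a i i = 0 := CharZero.eq_neg_self_iff.mp (hs i i)
  have h016 := hcl 0 1 6
  have h019 := hcl 0 1 9
  have h025 := hcl 0 2 5
  have h026 := hcl 0 2 6
  have h027 := hcl 0 2 7
  have h028 := hcl 0 2 8
  have h034 := hcl 0 3 4
  have h045 := hcl 0 4 5
  have h056 := hcl 0 5 6
  have h069 := hcl 0 6 9
  have h123 := hcl 1 2 3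
  have h124 := hcl 1 2 4
  have h126 := hcl 1 2 6
  have h134 := hcl 1 3 4
  have h136 := hcl 1 3 6
  have h138 := hcl 1 3 8
  simp [Fin.sum_univ_succ, gc18] at h016 h019 h025 h026 h027 h028 h034 h045 h056 h069
  simp [Fin.sum_univ_succ, gc18] at h123 h124 h126 h134 h136 h138
  fin_cases j <;> simp only [Fin.reduceFinMk] at hj ⊢
  · exact absurd rfl hj
  · linear_combination -h016 + h025 - h034 + hs 2 6 - hs 3 5 + hd 4
  · linear_combination (-h026 - h123 + hs 3 6) / 2
  · linear_combination -h027 + h045 + h124 + hs 3 7 - hd 5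
  · linear_combination h019 - h028 + h134 - hs 2 9 + hs 3 8
  · linear_combination -h056 + h126
  · linear_combination h136
  · exact hd 7
  · linear_combination h138
  · linear_combination h069

theorem apply_eight_eq_zero (hs : ∀ i j, a i j = -a j i) (hcl : gc18Closed K a)
    {j : Fin 10} (hj : j ≠ 0) : a 8 j = 0 := by
  have hd (i : Fin 10) : a i i = 0 := CharZero.eq_neg_self_iff.mp (hs i i)
  have h017 := hcl 0 1 7
  have h019 := hcl 0 1 9
  have h026 := hcl 0 2 6
  have h028 := hcl 0 2 8
  have h038 := hcl 0 3 8
  have h045 := hcl 0 4 5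
  have h056 := hcl 0 5 6
  have h057 := hcl 0 5 7
  have h123 := hcl 1 2 3
  have h124 := hcl 1 2 4
  have h126 := hcl 1 2 6
  have h127 := hcl 1 2 7
  have h135 := hcl 1 3 5
  have h146 := hcl 1 4 6
  have h147 := hcl 1 4 7
  have h149 := hcl 1 4 9
  simp [Fin.sum_univ_succ, gc18] at h017 h019 h026 h028 h038 h045 h056 h057
  simp [Fin.sum_univ_succ, gc18] at h123 h124 h126 h127 h135 h146 h147 h149
  fin_cases j <;> simp only [Fin.reduceFinMk] at hj ⊢
  · exact absurd rfl hj
  · linear_combination -h017 + (h026 + h123 - hs 3 6) / 2 + hs 2 7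
  · linear_combination -h045 - h124 + hd 5
  · linear_combination h019 - h028 - hs 2 9 + hs 3 8
  · linear_combination -h038 + h056 - h126 + h135 + hs 4 8
  · linear_combination -h057 + h127
  · linear_combination h146
  · linear_combination h147
  · exact hd 8
  · linear_combination h149

end gc18Closed

/-- The 10-dimensional Lie algebra with nonzero brackets
`[e₁,eᵢ] = e_{i+1}` (`2 ≤ i ≤ 9`), `[e₂,e₆] = e₁₀`, `[e₂,e₅] = e₉`,
`[e₂,e₄] = e₈`, `[e₂,e₃] = e₇` admits no symplectic structure: every closed
antisymmetric 2-form is degenerate. -/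
theorem stmt18 (K : Type*) [Field K] [CharZero K] :
    ∀ a : Fin 10 → Fin 10 → K,
      (∀ i j, a i j = - a j i) → gc18Closed K a →
      ∃ v : Fin 10 → K, v ≠ 0 ∧ ∀ j, ∑ i, v i * a i j = 0 := by
  intro a hs hcl
  exact exists_ne_zero_sum_mul_eq_zero_of_two_rows_supported_at a (by decide : (7 : Fin 10) ≠ 8)
    (fun _ hj => hcl.apply_seven_eq_zero hs hj) (fun _ hj => hcl.apply_eight_eq_zero hs hj)
end
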